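/- arXiv:1706.03900 — 6 statements merged into one kernel-verified Lean document; each statement's English description precedes it below -/
import Mathlib

section
/- Let A be a monoid (an associative semigroup with identity 1_A and absorbing element 0_A). Every finite A-module M can be written as a direct sum (wedge sum) of finitely many indecomposable A-modules, and this decomposition is unique up to isomorphism of the summands and reordering. -/
universe u v

/-- A module over a monoid-with-zero `A` on a pointed set ("vector space over 𝔽₁"):
a pointed set `(M, 0)` with an action of `A` satisfying `1•m = m`, `(a*b)•m = a•(b•m)`,
`0•m = 0` and `a•0 = 0`. -/
structure FModule (A : Type v) [MonoidWithZero A] : Type (max (u + 1) v) where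
  carrier : Type u
  zero : carrier
  smul : A → carrier → carrier
  one_smul : ∀ m, smul 1 m = m
  mul_smul : ∀ a b m, smul (a * b) m = smul a (smul b m)
  zero_smul : ∀ m, smul 0 m = zero
  smul_zero : ∀ a, smul a zero = zero

namespace FModule

variable {A : Type v} [MonoidWithZero A]

/-- `N` is an `A`-submodule of `M` : a subset containing the basepoint and closed under
the action of `A`. -/
def IsSubmod (M : FModule A) (N : Set M.carrier) : Prop :=
  M.zero ∈ N ∧ ∀ (a : A), ∀ m ∈ N, M.smul a m ∈ N

/-- The submodule `N ⊆ M` as an `A`-module in its own right. -/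
def sub (M : FModule A) (N : Set M.carrier) (h : M.IsSubmod N) : FModule A where
  carrier := N
  zero := ⟨M.zero, h.1⟩
  smul a m := ⟨M.smul a m.1, h.2 a m.1 m.2⟩
  one_smul m := Subtype.ext (M.one_smul m.1)
  mul_smul a b m := Subtype.ext (M.mul_smul a b m.1)
  zero_smul m := Subtype.ext (M.zero_smul m.1)
  smul_zero a := Subtype.ext (M.smul_zero a)

open Classical in
/-- The quotient `M/N` of `M` by a submodule `N`: the pointed set `(M ∖ N) ∪ {0}`
with the induced `A`-action. -/
noncomputable def quot (M : FModule A) (N : Set M.carrier) (h : M.IsSubmod N) :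
    FModule A where
  carrier := {x : M.carrier // x = M.zero ∨ x ∉ N}
  zero := ⟨M.zero, Or.inl rfl⟩
  smul a m := if hmem : M.smul a m.1 ∈ N then ⟨M.zero, Or.inl rfl⟩
    else ⟨M.smul a m.1, Or.inr hmem⟩
  one_smul := by
    classical
    rintro ⟨x, hx⟩
    by_cases hmem : M.smul 1 x ∈ N
    · have hxN : x ∈ N := by rwa [M.one_smul] at hmem
      have hx0 : x = M.zero := hx.resolve_right fun hc => hc hxN
      simp only [dif_pos hmem]
      exact Subtype.ext hx0.symm
    · simp only [dif_neg hmem]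
      exact Subtype.ext (M.one_smul x)
  mul_smul := by
    classical
    rintro a b ⟨x, hx⟩
    by_cases hb : M.smul b x ∈ N
    · have hab : M.smul (a * b) x ∈ N := by
        rw [M.mul_smul]; exact h.2 a _ hb
      have h0 : M.smul a M.zero ∈ N := by
        rw [M.smul_zero]; exact h.1
      simp only [dif_pos hb, dif_pos hab, dif_pos h0]
    · by_cases hab : M.smul a (M.smul b x) ∈ N
      · have hab' : M.smul (a * b) x ∈ N := by rw [M.mul_smul]; exact hab
        simp only [dif_pos hab', dif_neg hb, dif_pos hab]
      · have hab' : M.smul (a * b) x ∉ N := by rw [M.mul_smul]; exact hab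
        simp only [dif_neg hab', dif_neg hb, dif_neg hab]
        exact Subtype.ext (M.mul_smul a b x)
  zero_smul := by
    classical
    rintro ⟨x, hx⟩
    have h0 : M.smul 0 x ∈ N := by rw [M.zero_smul]; exact h.1
    simp only [dif_pos h0]
  smul_zero := by
    classical
    intro a
    have h0 : M.smul a M.zero ∈ N := by rw [M.smul_zero]; exact h.1
    simp only [dif_pos h0]

/-- A morphism of `A`-modules: a pointed map compatible with the `A`-action. -/
structure Hom (M N : FModule A) where
  toFun : M.carrier → N.carrier
  map_zero : toFun M.zero = N.zero
  map_smul : ∀ a m, toFun (M.smul a m) = N.smul a (toFun m)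

/-- A morphism is normal if every fibre other than the fibre of the basepoint has at
most one element. -/
def Hom.Normal {M N : FModule A} (f : Hom M N) : Prop :=
  ∀ m m', f.toFun m = f.toFun m' → f.toFun m ≠ N.zero → m = m'

/-- Composition of morphisms. -/
def Hom.comp {M N L : FModule A} (g : Hom N L) (f : Hom M N) : Hom M L where
  toFun := g.toFun ∘ f.toFun
  map_zero := by
    show g.toFun (f.toFun M.zero) = L.zero
    rw [f.map_zero, g.map_zero]
  map_smul a m := by
    show g.toFun (f.toFun (M.smul a m)) = L.smul a (g.toFun (f.toFun m))
    rw [f.map_smul, g.map_smul]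

/-- An isomorphism of `A`-modules. -/
structure Iso (M N : FModule A) where
  toEquiv : M.carrier ≃ N.carrier
  map_zero : toEquiv M.zero = N.zero
  map_smul : ∀ a m, toEquiv (M.smul a m) = N.smul a (toEquiv m)

def Iso.refl (M : FModule A) : Iso M M := ⟨Equiv.refl _, rfl, fun _ _ => rfl⟩

def Iso.symm {M N : FModule A} (e : Iso M N) : Iso N M where
  toEquiv := e.toEquiv.symm
  map_zero := by rw [Equiv.symm_apply_eq, e.map_zero]
  map_smul a m := by
    apply e.toEquiv.injective
    rw [e.map_smul, Equiv.apply_symm_apply, Equiv.apply_symm_apply]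

def Iso.trans {M N L : FModule A} (e : Iso M N) (f : Iso N L) : Iso M L where
  toEquiv := e.toEquiv.trans f.toEquiv
  map_zero := by
    simp only [Equiv.trans_apply, e.map_zero, f.map_zero]
  map_smul a m := by
    simp only [Equiv.trans_apply, e.map_smul, f.map_smul]

/-- The wedge sum (direct sum, coproduct) `M ⊕ N` of two `A`-modules, realized as the
subset of `M × N` of pairs with at least one coordinate equal to the basepoint. -/
def wedge (M N : FModule A) : FModule A where
  carrier := {p : M.carrier × N.carrier // p.1 = M.zero ∨ p.2 = N.zero}
  zero := ⟨(M.zero, N.zero), Or.inl rfl⟩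
  smul a p := ⟨(M.smul a p.1.1, N.smul a p.1.2), by
    rcases p.2 with h1 | h2
    · exact Or.inl (by rw [h1, M.smul_zero])
    · exact Or.inr (by rw [h2, N.smul_zero])⟩
  one_smul p := Subtype.ext (Prod.ext (M.one_smul _) (N.one_smul _))
  mul_smul a b p := Subtype.ext (Prod.ext (M.mul_smul _ _ _) (N.mul_smul _ _ _))
  zero_smul p := Subtype.ext (Prod.ext (M.zero_smul _) (N.zero_smul _))
  smul_zero a := Subtype.ext (Prod.ext (M.smul_zero _) (N.smul_zero _))

/-- A module `M` is of type α if every `a ∈ A` acts on `M` by a normal map of pointed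
sets, i.e. `a•m₁ = a•m₂` implies `m₁ = m₂` or `a•m₁ = a•m₂ = 0`. -/
def TypeAlpha (M : FModule A) : Prop :=
  ∀ (a : A) (m₁ m₂ : M.carrier),
    M.smul a m₁ = M.smul a m₂ → m₁ = m₂ ∨ M.smul a m₁ = M.zero

/-- A module is indecomposable if it is nonzero and admits no decomposition as a wedge
sum (internally: a pair of submodules covering `M` and meeting only in `0`) with both
pieces nonzero. -/
def Indecomposable (M : FModule A) : Prop :=
  (∃ m : M.carrier, m ≠ M.zero) ∧
  ∀ P Q : Set M.carrier, M.IsSubmod P → M.IsSubmod Q → P ∪ Q = Set.univ →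
    P ∩ Q ⊆ {M.zero} → P = {M.zero} ∨ Q = {M.zero}

end FModule
namespace FModule

variable {A : Type v} [MonoidWithZero A]

/-- Two submodules `P, Q` of `M` are isomorphic as `A`-modules: there is a pointed,
`A`-equivariant bijection of `P` onto `Q`. -/
def SubIso (M : FModule A) (P Q : Set M.carrier) : Prop :=
  ∃ φ : M.carrier → M.carrier, Set.BijOn φ P Q ∧ φ M.zero = M.zero ∧
    ∀ (a : A), ∀ m ∈ P, φ (M.smul a m) = M.smul a (φ m)

/-- The family of submodules `S i ⊆ M` is an internal direct sum (wedge sum)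
decomposition of `M`: the `S i` cover `M` and pairwise meet only in the basepoint. -/
def IsDecomp (M : FModule A) {k : ℕ} (S : Fin k → Set M.carrier) : Prop :=
  (∀ i, M.IsSubmod (S i)) ∧ insert M.zero (⋃ i, S i) = Set.univ ∧
    ∀ i j, i ≠ j → S i ∩ S j ⊆ {M.zero}

end FModule
namespace FModule

variable {A : Type v} [MonoidWithZero A]

/-- One-step relation: `y = a • x` with both `x, y` nonzero. -/
def Step (M : FModule A) (x y : M.carrier) : Prop :=
  x ≠ M.zero ∧ y ≠ M.zero ∧ ∃ a, M.smul a x = y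

/-- The equivalence relation generated by `Step`. -/
def Rel (M : FModule A) (x y : M.carrier) : Prop := Relation.EqvGen M.Step x y

theorem Rel.rrefl (M : FModule A) (x : M.carrier) : M.Rel x x := Relation.EqvGen.refl x
theorem Rel.symm {M : FModule A} {x y : M.carrier} (h : M.Rel x y) : M.Rel y x :=
  Relation.EqvGen.symm _ _ h
theorem Rel.trans {M : FModule A} {x y z : M.carrier} (h : M.Rel x y) (h' : M.Rel y z) :
    M.Rel x z := Relation.EqvGen.trans _ _ _ h h'

theorem rel_zero_iff {M : FModule A} {x y : M.carrier} (h : M.Rel x y) :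
    (x = M.zero ↔ y = M.zero) := by
  induction h with
  | rel x y h => exact ⟨fun hx => absurd hx h.1, fun hy => absurd hy h.2.1⟩
  | refl x => exact Iff.rfl
  | symm x y h ih => exact ih.symm
  | trans x y z h h' ih ih' => exact ih.trans ih'

/-- The `Rel`-class of `m`. -/
def cls (M : FModule A) (m : M.carrier) : Set M.carrier := {x | M.Rel m x}

theorem mem_cls_self (M : FModule A) (m : M.carrier) : m ∈ M.cls m := Rel.rrefl M m

theorem ne_zero_of_mem_cls {M : FModule A} {m x : M.carrier} (hm : m ≠ M.zero)
    (hx : x ∈ M.cls m) : x ≠ M.zero := fun h => hm ((rel_zero_iff hx).mpr h)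

theorem cls_eq_of_mem {M : FModule A} {m x : M.carrier} (hx : x ∈ M.cls m) :
    M.cls x = M.cls m := by
  ext y
  exact ⟨fun hy => Rel.trans hx hy, fun hy => Rel.trans (Rel.symm hx) hy⟩

theorem smul_mem_cls {M : FModule A} {m x : M.carrier} (hm : m ≠ M.zero)
    (hx : x ∈ M.cls m) (a : A) (hne : M.smul a x ≠ M.zero) : M.smul a x ∈ M.cls m :=
  Rel.trans hx (Relation.EqvGen.rel _ _ ⟨ne_zero_of_mem_cls hm hx, hne, a, rfl⟩)

theorem isSubmod_insert_cls (M : FModule A) {m : M.carrier} (hm : m ≠ M.zero) :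
    M.IsSubmod (insert M.zero (M.cls m)) := by
  constructor
  · exact Set.mem_insert _ _
  · intro a x hx
    rcases hx with hx | hx
    · subst hx; rw [M.smul_zero]; exact Set.mem_insert _ _
    · by_cases hz : M.smul a x = M.zero
      · rw [hz]; exact Set.mem_insert _ _
      · exact Set.mem_insert_of_mem _ (smul_mem_cls hm hx a hz)

theorem rel_mem_insert_cls {M : FModule A} {m x y : M.carrier}
    (hx : x ∈ insert M.zero (M.cls m)) (h : M.Rel x y) : y ∈ insert M.zero (M.cls m) := by
  rcases hx with hx | hx
  · exact Or.inl (((rel_zero_iff h).mp hx).symm ▸ rfl)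
  · exact Or.inr (Rel.trans hx h)

/-- Membership in a submodule `P` of a "class" submodule is constant along `Rel`,
provided `P, Q` form a splitting. -/
theorem mem_iff_of_rel {M : FModule A} {m : M.carrier} (hm : m ≠ M.zero)
    (h : M.IsSubmod (insert M.zero (M.cls m)))
    {P Q : Set (M.sub (insert M.zero (M.cls m)) h).carrier}
    (hP : (M.sub _ h).IsSubmod P) (hQ : (M.sub _ h).IsSubmod Q)
    (hcov : P ∪ Q = Set.univ) (hint : P ∩ Q ⊆ {(M.sub _ h).zero}) :
    ∀ x y : M.carrier, M.Rel x y →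
      ∀ (hx : x ∈ insert M.zero (M.cls m)) (hy : y ∈ insert M.zero (M.cls m)),
        (⟨x, hx⟩ ∈ P ↔ ⟨y, hy⟩ ∈ P) := by
  intro x y hrel
  induction hrel with
  | rel x y hstep =>
    intro hx hy
    obtain ⟨hx0, hy0, a, ha⟩ := hstep
    have hsm : ∀ (hx' : x ∈ insert M.zero (M.cls m)),
        (M.sub _ h).smul a ⟨x, hx'⟩ = ⟨y, hy⟩ := by
      intro hx'; exact Subtype.ext ha
    constructor
    · intro hxP
      have := hP.2 a _ hxP
      rwa [hsm hx] at this
    · intro hyP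
      have hxPQ : (⟨x, hx⟩ : (M.sub _ h).carrier) ∈ P ∪ Q := by
        rw [hcov]; trivial
      rcases hxPQ with hxP | hxQ
      · exact hxP
      · exfalso
        have := hQ.2 a _ hxQ
        rw [hsm hx] at this
        have hyz := hint ⟨hyP, this⟩
        exact hy0 (congrArg Subtype.val hyz)
  | refl x => intro hx hy; exact Iff.rfl
  | symm x y hxy ih =>
    intro hx hy; exact (ih hy hx).symm
  | trans x y z hxy hyz ih ih' =>
    intro hx hz
    have hy : y ∈ insert M.zero (M.cls m) := rel_mem_insert_cls hx hxy
    exact (ih hx hy).trans (ih' hy hz)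

theorem exists_ne_zero_of_ne_singleton {M : FModule A} {P : Set M.carrier}
    (h0 : M.zero ∈ P) (h : P ≠ {M.zero}) : ∃ p ∈ P, p ≠ M.zero := by
  by_contra hc
  push_neg at hc
  exact h (Set.eq_singleton_iff_unique_mem.mpr ⟨h0, hc⟩)

theorem indecomp_of_eq_cls {M : FModule A} {N : Set M.carrier} (h : M.IsSubmod N)
    {m : M.carrier} (hm : m ≠ M.zero) (hN : N = insert M.zero (M.cls m)) :
    (M.sub N h).Indecomposable := by
  subst hN
  constructor
  · refine ⟨⟨m, Set.mem_insert_of_mem _ (mem_cls_self M m)⟩, fun he => hm ?_⟩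
    exact congrArg Subtype.val he
  · intro P Q hP hQ hcov hint
    by_contra hc
    push_neg at hc
    obtain ⟨hPne, hQne⟩ := hc
    obtain ⟨p, hpP, hp0⟩ := exists_ne_zero_of_ne_singleton hP.1 hPne
    obtain ⟨q, hqQ, hq0⟩ := exists_ne_zero_of_ne_singleton hQ.1 hQne
    have hp0' : p.1 ≠ M.zero := fun hz => hp0 (Subtype.ext hz)
    have hq0' : q.1 ≠ M.zero := fun hz => hq0 (Subtype.ext hz)
    have hpc : p.1 ∈ M.cls m := p.2.resolve_left hp0'
    have hqc : q.1 ∈ M.cls m := q.2.resolve_left hq0'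
    have hrel : M.Rel p.1 q.1 := Rel.trans (Rel.symm hpc) hqc
    have := (mem_iff_of_rel hm h hP hQ hcov hint p.1 q.1 hrel p.2 q.2).mp hpP
    have hqz := hint ⟨this, hqQ⟩
    exact hq0 hqz

/-- In any decomposition, membership in a summand is constant along `Rel` (away from 0). -/
theorem rel_mem_summand {M : FModule A} {k : ℕ} {S : Fin k → Set M.carrier}
    (hdec : M.IsDecomp S) (i : Fin k) :
    ∀ x y : M.carrier, M.Rel x y → x ≠ M.zero → (x ∈ S i ↔ y ∈ S i) := by
  intro x y hrel
  induction hrel with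
  | rel x y hstep =>
    intro _
    obtain ⟨hx0, hy0, a, ha⟩ := hstep
    constructor
    · intro hx; exact ha ▸ (hdec.1 i).2 a x hx
    · intro hy
      have hxu : x ∈ insert M.zero (⋃ j, S j) := by rw [hdec.2.1]; trivial
      rcases hxu with hx | hx
      · exact absurd hx hx0
      · obtain ⟨j, hj⟩ := Set.mem_iUnion.mp hx
        by_cases hij : i = j
        · exact hij ▸ hj
        · exfalso
          have hyj : y ∈ S j := ha ▸ (hdec.1 j).2 a x hj
          exact hy0 (hdec.2.2 i j hij ⟨hy, hyj⟩)
  | refl x => intro _; exact Iff.rfl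
  | symm x y hxy ih =>
    intro hy0
    have hx0 : x ≠ M.zero := fun hz => hy0 ((rel_zero_iff hxy).mp hz)
    exact (ih hx0).symm
  | trans x y z hxy hyz ih ih' =>
    intro hx0
    have hy0 : y ≠ M.zero := fun hz => hx0 ((rel_zero_iff hxy).mpr hz)
    exact (ih hx0).trans (ih' hy0)

/-- Every indecomposable summand of a decomposition is a class (with basepoint). -/
theorem summand_eq_cls {M : FModule A} {k : ℕ} {S : Fin k → Set M.carrier}
    (hS : ∀ i, M.IsSubmod (S i)) (hdec : M.IsDecomp S) (i : Fin k)
    (hind : (M.sub (S i) (hS i)).Indecomposable) :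
    ∃ m : M.carrier, m ≠ M.zero ∧ m ∈ S i ∧ S i = insert M.zero (M.cls m) := by
  obtain ⟨⟨m, hmS⟩, hm0⟩ := hind.1
  have hm0' : m ≠ M.zero := fun hz => hm0 (Subtype.ext hz)
  refine ⟨m, hm0', hmS, ?_⟩
  apply Set.Subset.antisymm
  · -- S i ⊆ insert 0 (cls m)
    intro x hx
    by_contra hxc
    have hx0 : x ≠ M.zero := fun hz => hxc (hz ▸ Set.mem_insert _ _)
    have hxcls : x ∉ M.cls m := fun hc => hxc (Set.mem_insert_of_mem _ hc)
    -- split S i into the class of m and the rest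
    set P : Set (M.sub (S i) (hS i)).carrier :=
      {y | y.1 ∈ insert M.zero (M.cls m)} with hPdef
    set Q : Set (M.sub (S i) (hS i)).carrier :=
      {y | y.1 = M.zero ∨ y.1 ∉ M.cls m} with hQdef
    have hPsub : (M.sub (S i) (hS i)).IsSubmod P := by
      constructor
      · exact Set.mem_insert _ _
      · intro a y hy
        show M.smul a y.1 ∈ insert M.zero (M.cls m)
        exact (isSubmod_insert_cls M hm0').2 a _ hy
    have hQsub : (M.sub (S i) (hS i)).IsSubmod Q := by
      constructor
      · exact Or.inl rfl
      · intro a y hy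
        show M.smul a y.1 = M.zero ∨ M.smul a y.1 ∉ M.cls m
        rcases hy with hy | hy
        · exact Or.inl (hy ▸ M.smul_zero a)
        · by_cases hz : M.smul a y.1 = M.zero
          · exact Or.inl hz
          · refine Or.inr fun hc => ?_
            have hy0 : y.1 ≠ M.zero := fun h0 => hz (h0 ▸ M.smul_zero a)
            have : M.Rel m y.1 :=
              Rel.trans hc (Rel.symm (Relation.EqvGen.rel _ _ ⟨hy0, hz, a, rfl⟩))
            exact hy this
    have hcov : P ∪ Q = Set.univ := by
      ext y
      simp only [Set.mem_union, Set.mem_univ, iff_true]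
      by_cases hc : y.1 ∈ M.cls m
      · exact Or.inl (Set.mem_insert_of_mem _ hc)
      · exact Or.inr (Or.inr hc)
    have hint : P ∩ Q ⊆ {(M.sub (S i) (hS i)).zero} := by
      rintro y ⟨hyP, hyQ⟩
      rcases hyP with hy0 | hyc
      · exact Subtype.ext hy0
      · exfalso
        rcases hyQ with hy0 | hync
        · exact ne_zero_of_mem_cls hm0' hyc hy0
        · exact hync hyc
    rcases hind.2 P Q hPsub hQsub hcov hint with hPz | hQz
    · have : (⟨m, hmS⟩ : (M.sub (S i) (hS i)).carrier) ∈ P :=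
        Set.mem_insert_of_mem _ (mem_cls_self M m)
      rw [hPz] at this
      exact hm0 this
    · have : (⟨x, hx⟩ : (M.sub (S i) (hS i)).carrier) ∈ Q := Or.inr hxcls
      rw [hQz] at this
      exact hx0 (congrArg Subtype.val this)
  · -- insert 0 (cls m) ⊆ S i
    intro x hx
    rcases hx with hx | hx
    · exact hx ▸ (hS i).1
    · exact (rel_mem_summand hdec i m x hx hm0').mp hmS

/-- Summands of a decomposition with nonzero elements are pairwise distinct. -/
theorem summand_inj {M : FModule A} {k : ℕ} {S : Fin k → Set M.carrier}
    (hdec : M.IsDecomp S) {i j : Fin k} {m : M.carrier} (hm : m ≠ M.zero)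
    (hmi : m ∈ S i) (heq : S i = S j) : i = j := by
  by_contra hij
  exact hm (hdec.2.2 i j hij ⟨hmi, heq ▸ hmi⟩)

end FModule

open FModule in
/-- **Krull–Schmidt for finite modules over a monoid.**  Every finite `A`-module
decomposes as a wedge sum of finitely many indecomposable `A`-modules, and the
decomposition is unique up to isomorphism of the summands and reordering. -/
theorem fmodule_krull_schmidt {A : Type v} [MonoidWithZero A]
    (M : FModule A) (hfin : Finite M.carrier) :
    (∃ (k : ℕ) (S : Fin k → Set M.carrier) (hS : ∀ i, M.IsSubmod (S i)),
      M.IsDecomp S ∧ ∀ i, (M.sub (S i) (hS i)).Indecomposable) ∧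
    (∀ (k l : ℕ) (S : Fin k → Set M.carrier) (T : Fin l → Set M.carrier)
      (hS : ∀ i, M.IsSubmod (S i)) (hT : ∀ j, M.IsSubmod (T j)),
      M.IsDecomp S → M.IsDecomp T →
      (∀ i, (M.sub (S i) (hS i)).Indecomposable) →
      (∀ j, (M.sub (T j) (hT j)).Indecomposable) →
      ∃ σ : Fin k ≃ Fin l, ∀ i, M.SubIso (S i) (T (σ i))) := by
  classical
  constructor
  · -- existence
    haveI := hfin
    set 𝒞 : Set (Set M.carrier) :=
      {N | ∃ m, m ≠ M.zero ∧ N = insert M.zero (M.cls m)} with h𝒞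
    haveI : Finite ↥𝒞 := by
      haveI : Finite (Set M.carrier) := by infer_instance
      infer_instance
    obtain ⟨k, ⟨e⟩⟩ := Finite.exists_equiv_fin ↥𝒞
    set S : Fin k → Set M.carrier := fun i => ((e.symm i : ↥𝒞) : Set M.carrier) with hSdef
    have hcls : ∀ i : Fin k, ∃ m, m ≠ M.zero ∧ S i = insert M.zero (M.cls m) :=
      fun i => (e.symm i).2
    choose rep hrep0 hrepeq using hcls
    have hS : ∀ i, M.IsSubmod (S i) := by
      intro i; rw [hrepeq i]; exact isSubmod_insert_cls M (hrep0 i)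
    have hcov : insert M.zero (⋃ i, S i) = Set.univ := by
      ext x
      simp only [Set.mem_univ, iff_true]
      by_cases hx : x = M.zero
      · exact Set.mem_insert_iff.mpr (Or.inl hx)
      · refine Set.mem_insert_of_mem _ (Set.mem_iUnion.mpr ?_)
        have hmem : insert M.zero (M.cls x) ∈ 𝒞 := ⟨x, hx, rfl⟩
        refine ⟨e ⟨_, hmem⟩, ?_⟩
        show x ∈ ((e.symm (e ⟨_, hmem⟩) : ↥𝒞) : Set M.carrier)
        rw [Equiv.symm_apply_apply]
        exact Set.mem_insert_of_mem _ (mem_cls_self M x)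
    have hpair : ∀ i j, i ≠ j → S i ∩ S j ⊆ {M.zero} := by
      intro i j hij x hx
      obtain ⟨hxi, hxj⟩ := hx
      simp only [Set.mem_singleton_iff]
      by_contra hx0
      rw [hrepeq i] at hxi
      rw [hrepeq j] at hxj
      have hxi' : x ∈ M.cls (rep i) := hxi.resolve_left hx0
      have hxj' : x ∈ M.cls (rep j) := hxj.resolve_left hx0
      have hceq : M.cls (rep i) = M.cls (rep j) :=
        (cls_eq_of_mem hxi').symm.trans (cls_eq_of_mem hxj')
      have hSeq : S i = S j := by rw [hrepeq i, hrepeq j, hceq]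
      exact hij (e.symm.injective (Subtype.ext hSeq))
    exact ⟨k, S, hS, ⟨hS, hcov, hpair⟩,
      fun i => indecomp_of_eq_cls (hS i) (hrep0 i) (hrepeq i)⟩
  · -- uniqueness
    intro k l S T hS hT hdS hdT hiS hiT
    choose mS hmS0 hmSmem hmSeq using fun i => summand_eq_cls hS hdS i (hiS i)
    choose mT hmT0 hmTmem hmTeq using fun j => summand_eq_cls hT hdT j (hiT j)
    have key : ∀ i, ∃ j, S i = T j := by
      intro i
      have hmem : mS i ∈ insert M.zero (⋃ j, T j) := by rw [hdT.2.1]; trivial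
      rcases hmem with h0 | hU
      · exact absurd h0 (hmS0 i)
      · obtain ⟨j, hj⟩ := Set.mem_iUnion.mp hU
        refine ⟨j, ?_⟩
        have hjc : mS i ∈ M.cls (mT j) := by
          rw [hmTeq j] at hj
          exact hj.resolve_left (hmS0 i)
        rw [hmSeq i, hmTeq j, cls_eq_of_mem hjc]
    have keyT : ∀ j, ∃ i, T j = S i := by
      intro j
      have hmem : mT j ∈ insert M.zero (⋃ i, S i) := by rw [hdS.2.1]; trivial
      rcases hmem with h0 | hU
      · exact absurd h0 (hmT0 j)
      · obtain ⟨i, hi⟩ := Set.mem_iUnion.mp hU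
        refine ⟨i, ?_⟩
        have hic : mT j ∈ M.cls (mS i) := by
          rw [hmSeq i] at hi
          exact hi.resolve_left (hmT0 j)
        rw [hmTeq j, hmSeq i, cls_eq_of_mem hic]
    choose f hf using key
    choose g hg using keyT
    have hgf : ∀ i, g (f i) = i := fun i =>
      (summand_inj hdS (hmS0 i) (hmSmem i) ((hf i).trans (hg (f i)))).symm
    have hfg : ∀ j, f (g j) = j := fun j =>
      (summand_inj hdT (hmT0 j) (hmTmem j) ((hg j).trans (hf (g j)))).symm
    refine ⟨⟨f, g, hgf, hfg⟩, fun i => ?_⟩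
    refine ⟨id, ?_, rfl, fun a m _ => rfl⟩
    show Set.BijOn id (S i) (T (f i))
    rw [← hf i]
    exact Set.bijOn_id _
end

section
/- Let A be a finitely generated monoid and let M, N be finite A-modules. Then there are only finitely many admissible short exact sequences 0 → M → L → N → 0 of A-modules, up to isomorphism. -/
universe u v

namespace FModule

variable {A : Type v} [MonoidWithZero A]

/-- An admissible short exact sequence `0 → M → L → N → 0` of `A`-modules:
a sequence exact at `M`, `L` and `N` in which all morphisms are normal. -/
structure AdmissibleSES (M N : FModule.{u} A) : Type (max (u + 1) v) where
  mid : FModule.{u} A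
  inj : Hom M mid
  proj : Hom mid N
  exact_left : ∀ m, inj.toFun m = mid.zero → m = M.zero
  exact_mid : {x | proj.toFun x = N.zero} = Set.range inj.toFun
  exact_right : Function.Surjective proj.toFun
  normal_inj : inj.Normal
  normal_proj : proj.Normal

/-- Isomorphism of admissible short exact sequences `0 → M → L → N → 0`
(identity on `M` and `N`, an isomorphism on the middle terms). -/
def sesEquiv (M N : FModule.{u} A) (E E' : AdmissibleSES M N) : Prop :=
  ∃ φ : Iso E.mid E'.mid,
    (∀ m, φ.toEquiv (E.inj.toFun m) = E'.inj.toFun m) ∧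
    (∀ x, E'.proj.toFun (φ.toEquiv x) = E.proj.toFun x)

end FModule

/-!
Exactness and normality force the middle term `L` of an admissible sequence to be, as a pointed
set, `M ⊔ (N ∖ {0})`: the map that is the inclusion on `M` and a section of the projection on
`N ∖ {0}` is a bijection, and it is the only one compatible with both maps. Hence isomorphic
sequences transport their actions to the same action of `A` on this fixed finite set, and
sequences with the same transported action are isomorphic. Such an action is determined by the
images of finitely many generators, so there are only finitely many of them.
-/

theorem MonoidHom.finite_of_fg (G H : Type*) [Monoid G] [Monoid.FG G] [Monoid H] [Finite H] :
    Finite (G →* H) := by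
  obtain ⟨S, hS⟩ := Monoid.FG.fg_top (M := G)
  exact .of_injective (fun f (s : S) => f s) fun f g hfg =>
    MonoidHom.eq_of_eqOn_denseM hS fun s hs => congrFun hfg ⟨s, hs⟩

namespace FModule

variable {A : Type v} [MonoidWithZero A] {M N : FModule.{u} A}

abbrev ExtCarrier (M N : FModule.{u} A) : Type u :=
  M.carrier ⊕ {n : N.carrier // n ≠ N.zero}

namespace AdmissibleSES

section

variable (E : AdmissibleSES M N)

theorem inj_injective : Function.Injective E.inj.toFun := by
  intro m m' h
  by_cases h0 : E.inj.toFun m = E.mid.zero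
  · rw [E.exact_left m h0, E.exact_left m' (h ▸ h0)]
  · exact E.normal_inj m m' h h0

theorem proj_inj (m : M.carrier) : E.proj.toFun (E.inj.toFun m) = N.zero :=
  E.exact_mid.ge ⟨m, rfl⟩

theorem mem_range_inj_of_proj_eq_zero {x : E.mid.carrier} (hx : E.proj.toFun x = N.zero) :
    x ∈ Set.range E.inj.toFun :=
  E.exact_mid.le hx

noncomputable def split : ExtCarrier M N → E.mid.carrier :=
  Sum.elim E.inj.toFun fun n => Function.surjInv E.exact_right n.1

theorem split_inl (m : M.carrier) : E.split (.inl m) = E.inj.toFun m := rfl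

theorem proj_split_inr (n : {n : N.carrier // n ≠ N.zero}) :
    E.proj.toFun (E.split (.inr n)) = n.1 :=
  Function.surjInv_eq E.exact_right n.1

theorem split_bijective : Function.Bijective E.split := by
  refine ⟨?_, fun x => ?_⟩
  · rintro (m | n) (m' | n') h
    · exact congrArg Sum.inl (E.inj_injective h)
    · have := congrArg E.proj.toFun h
      rw [split_inl, proj_inj, proj_split_inr] at this
      exact absurd this.symm n'.2
    · have := congrArg E.proj.toFun h
      rw [split_inl, proj_inj, proj_split_inr] at this
      exact absurd this n.2
    · have := congrArg E.proj.toFun h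
      rw [proj_split_inr, proj_split_inr] at this
      exact congrArg Sum.inr (Subtype.ext this)
  · by_cases hx : E.proj.toFun x = N.zero
    · obtain ⟨m, rfl⟩ := E.mem_range_inj_of_proj_eq_zero hx
      exact ⟨.inl m, rfl⟩
    · refine ⟨.inr ⟨_, hx⟩, E.normal_proj _ _ ?_ ?_⟩ <;> rw [proj_split_inr]
      exact hx

noncomputable def splitEquiv : ExtCarrier M N ≃ E.mid.carrier :=
  Equiv.ofBijective _ E.split_bijective

theorem splitEquiv_apply (c : ExtCarrier M N) : E.splitEquiv c = E.split c := rfl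

noncomputable def action : A →* Function.End (ExtCarrier M N) where
  toFun a c := E.splitEquiv.symm (E.mid.smul a (E.splitEquiv c))
  map_one' := funext fun c => by simp only [E.mid.one_smul, Equiv.symm_apply_apply]; rfl
  map_mul' a b := funext fun c => by
    change _ = E.splitEquiv.symm (E.mid.smul a (E.splitEquiv (E.splitEquiv.symm _)))
    rw [Equiv.apply_symm_apply, E.mid.mul_smul]

theorem splitEquiv_action (a : A) (c : ExtCarrier M N) :
    E.splitEquiv (E.action a c) = E.mid.smul a (E.splitEquiv c) :=
  E.splitEquiv.apply_symm_apply _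

end

variable {E E' : AdmissibleSES M N}

theorem splitEquiv_eq_of_iso (φ : Iso E.mid E'.mid)
    (hinj : ∀ m, φ.toEquiv (E.inj.toFun m) = E'.inj.toFun m)
    (hproj : ∀ x, E'.proj.toFun (φ.toEquiv x) = E.proj.toFun x) (c : ExtCarrier M N) :
    φ.toEquiv (E.splitEquiv c) = E'.splitEquiv c := by
  rcases c with m | n
  · exact hinj m
  · rw [splitEquiv_apply, splitEquiv_apply]
    have h : E'.proj.toFun (φ.toEquiv (E.split (.inr n))) = n.1 := by
      rw [hproj, proj_split_inr]
    refine E'.normal_proj _ _ (h.trans (E'.proj_split_inr n).symm) ?_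
    rw [h]
    exact n.2

theorem action_eq_of_sesEquiv (h : sesEquiv M N E E') : E.action = E'.action := by
  obtain ⟨φ, hinj, hproj⟩ := h
  have hφ := splitEquiv_eq_of_iso φ hinj hproj
  refine MonoidHom.ext fun a => funext fun c => E'.splitEquiv.injective ?_
  rw [splitEquiv_action, ← hφ, ← hφ, splitEquiv_action, φ.map_smul]

theorem sesEquiv_of_action_eq (h : E.action = E'.action) : sesEquiv M N E E' := by
  let φ := E.splitEquiv.symm.trans E'.splitEquiv
  have hφ (c : ExtCarrier M N) : φ (E.splitEquiv c) = E'.splitEquiv c :=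
    congrArg E'.splitEquiv (E.splitEquiv.symm_apply_apply c)
  refine ⟨⟨φ, ?_, fun a x => ?_⟩, fun m => hφ (.inl m), fun x => ?_⟩
  · have h0 := hφ (.inl M.zero)
    rwa [splitEquiv_apply, splitEquiv_apply, split_inl, split_inl, E.inj.map_zero,
      E'.inj.map_zero] at h0
  · obtain ⟨c, rfl⟩ := E.splitEquiv.surjective x
    rw [hφ, ← splitEquiv_action, hφ, h, splitEquiv_action]
  · obtain ⟨m | n, rfl⟩ := E.splitEquiv.surjective x
    · rw [hφ, splitEquiv_apply, splitEquiv_apply, split_inl, split_inl, proj_inj, proj_inj]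
    · rw [hφ, splitEquiv_apply, splitEquiv_apply, proj_split_inr, proj_split_inr]

end AdmissibleSES

end FModule

open FModule in
/-- For a finitely generated monoid `A` and finite `A`-modules `M`, `N`, there are
only finitely many admissible short exact sequences `0 → M → L → N → 0` up to
isomorphism. -/
theorem finitely_many_admissible_ses {A : Type v} [MonoidWithZero A] [Monoid.FG A]
    (M N : FModule.{u} A) (hM : Finite M.carrier) (hN : Finite N.carrier) :
    Finite (Quot (sesEquiv M N)) := by
  have : Finite (Function.End (ExtCarrier M N)) := inferInstanceAs (Finite (ExtCarrier M N → _))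
  have := MonoidHom.finite_of_fg A (Function.End (ExtCarrier M N))
  refine .of_injective
    (Quot.lift AdmissibleSES.action fun _ _ => AdmissibleSES.action_eq_of_sesEquiv) ?_
  rintro ⟨E⟩ ⟨E'⟩ h
  exact Quot.sound (AdmissibleSES.sesEquiv_of_action_eq h)
end

section
/- There exist a finitely generated monoid A and an admissible short exact sequence 0 → N → M → M/N → 0 of finite A-modules such that N and M/N are of type α but M is not of type α. Concretely, for A = F₁⟨t⟩ the free monoid on one generator t (with zero adjoined), the module M = {0, a, b, c, d} with t·a = t·b = c, t·c = d, t·d = 0, and the submodule N = {0, a, c, d}, give such a sequence. -/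
universe u v

namespace FModule

variable {A : Type v} [MonoidWithZero A]

/-- The canonical inclusion `N → M` of a submodule. -/
def inclHom (M : FModule A) (N : Set M.carrier) (h : M.IsSubmod N) :
    Hom (M.sub N h) M where
  toFun := Subtype.val
  map_zero := rfl
  map_smul _ _ := rfl

open Classical in
/-- The canonical projection `M → M/N`. -/
noncomputable def projHom (M : FModule A) (N : Set M.carrier) (h : M.IsSubmod N) :
    Hom M (M.quot N h) where
  toFun m := if hm : m ∈ N then ⟨M.zero, Or.inl rfl⟩ else ⟨m, Or.inr hm⟩
  map_zero := dif_pos h.1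
  map_smul a m := by
    show _ = (M.quot N h).smul a _
    simp only [FModule.quot]
    by_cases hm : m ∈ N
    · simp only [dif_pos hm, dif_pos (h.2 a m hm),
        dif_pos (show M.smul a M.zero ∈ N by rw [M.smul_zero]; exact h.1)]
    · simp only [dif_neg hm]

end FModule

/-!
In `M` the generator `t` sends both `a` and `b` to `c ≠ 0`, so `M` is not of type α. But `b` is
the only element outside `N = {0, a, c, d}`, so `M/N = {0, b}` has a single nonzero element and
is of type α for trivial reasons. On `N` the generator acts by the chain `a ↦ c ↦ d ↦ 0`, which is
normal; since composites of normal pointed maps are normal, this suffices for `N` to be of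
type α. Admissibility and exactness of `0 → N → M → M/N → 0` hold for every submodule.
-/

open scoped WithZero

theorem closure_zero_exp_one_eq_top :
    Submonoid.closure {0, WithZero.exp 1} = (⊤ : Submonoid ℕᵐ⁰) := by
  refine (Submonoid.eq_top_iff' _).2 fun a => ?_
  by_cases ha : a = 0
  · exact ha ▸ Submonoid.subset_closure (Set.mem_insert _ _)
  · have hexp : WithZero.exp 1 ∈ Submonoid.closure {(0 : ℕᵐ⁰), WithZero.exp 1} :=
      Submonoid.subset_closure (Set.mem_insert_of_mem _ rfl)
    rw [← WithZero.exp_log ha, ← mul_one (WithZero.log a), ← smul_eq_mul, WithZero.exp_nsmul]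
    exact Submonoid.pow_mem _ hexp _

instance : Monoid.FG ℕᵐ⁰ :=
  Monoid.fg_iff.2 ⟨_, closure_zero_exp_one_eq_top, Set.toFinite _⟩

namespace FModule

variable {A : Type v} [MonoidWithZero A]

section ShortExact

variable (M : FModule A) (N : Set M.carrier) (h : M.IsSubmod N)

theorem inclHom_eq_zero {x : (M.sub N h).carrier} (hx : (inclHom M N h).toFun x = M.zero) :
    x = (M.sub N h).zero :=
  Subtype.ext hx

theorem inclHom_normal : (inclHom M N h).Normal :=
  fun _ _ hmm _ => Subtype.ext hmm

theorem projHom_apply_of_mem {m : M.carrier} (hm : m ∈ N) :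
    (projHom M N h).toFun m = (M.quot N h).zero :=
  dif_pos hm

theorem projHom_apply_of_notMem {m : M.carrier} (hm : m ∉ N) :
    (projHom M N h).toFun m = ⟨m, Or.inr hm⟩ :=
  dif_neg hm

theorem projHom_eq_zero_iff {m : M.carrier} :
    (projHom M N h).toFun m = (M.quot N h).zero ↔ m ∈ N := by
  refine ⟨fun hm => ?_, projHom_apply_of_mem M N h⟩
  by_contra hmN
  rw [projHom_apply_of_notMem M N h hmN] at hm
  have hm0 : m = M.zero := congrArg Subtype.val hm
  exact hmN (hm0 ▸ h.1)

theorem ker_projHom_eq_range_inclHom :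
    {m | (projHom M N h).toFun m = (M.quot N h).zero} = Set.range (inclHom M N h).toFun := by
  ext m
  simp only [Set.mem_ofPred_eq, projHom_eq_zero_iff]
  exact Subtype.range_coe.symm ▸ Iff.rfl

theorem projHom_surjective : Function.Surjective (projHom M N h).toFun := by
  rintro ⟨x, hx0 | hxN⟩
  · exact ⟨M.zero, (projHom M N h).map_zero.trans (Subtype.ext hx0.symm)⟩
  · exact ⟨x, projHom_apply_of_notMem M N h hxN⟩

theorem projHom_normal : (projHom M N h).Normal := by
  intro m m' hmm hne
  have hm : m ∉ N := fun hm => hne (projHom_apply_of_mem M N h hm)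
  have hm' : m' ∉ N := fun hm' => hne (hmm ▸ projHom_apply_of_mem M N h hm')
  rw [projHom_apply_of_notMem M N h hm, projHom_apply_of_notMem M N h hm'] at hmm
  exact congrArg Subtype.val hmm

end ShortExact

section TypeAlpha

def ActsNormally (M : FModule A) (a : A) : Prop :=
  ∀ m₁ m₂, M.smul a m₁ = M.smul a m₂ → m₁ = m₂ ∨ M.smul a m₁ = M.zero

variable {M : FModule A}

theorem actsNormally_zero : M.ActsNormally 0 :=
  fun m₁ _ _ => Or.inr (M.zero_smul m₁)

theorem actsNormally_one : M.ActsNormally 1 :=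
  fun m₁ m₂ hm => Or.inl (by rwa [M.one_smul, M.one_smul] at hm)

theorem ActsNormally.mul {a b : A} (ha : M.ActsNormally a) (hb : M.ActsNormally b) :
    M.ActsNormally (a * b) := by
  intro m₁ m₂ hm
  rw [M.mul_smul, M.mul_smul] at hm
  rw [M.mul_smul]
  rcases ha _ _ hm with hb₁₂ | hzero
  · rcases hb _ _ hb₁₂ with h₁₂ | hb₁
    · exact Or.inl h₁₂
    · exact Or.inr (by rw [hb₁, M.smul_zero])
  · exact Or.inr hzero

theorem typeAlpha_of_closure_eq_top {S : Set A} (hS : Submonoid.closure S = ⊤)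
    (hnormal : ∀ s ∈ S, M.ActsNormally s) : M.TypeAlpha := by
  intro a
  have ha : a ∈ Submonoid.closure S := hS ▸ Submonoid.mem_top a
  induction ha using Submonoid.closure_induction with
  | mem s hs => exact hnormal s hs
  | one => exact actsNormally_one
  | mul a b _ _ ha hb => exact ActsNormally.mul ha hb

theorem typeAlpha_of_nonzero_subsingleton
    (hM : ∀ m m' : M.carrier, m ≠ M.zero → m' ≠ M.zero → m = m') : M.TypeAlpha := by
  intro a m₁ m₂ hm
  by_cases h₁ : m₁ = M.zero
  · exact Or.inr (by rw [h₁, M.smul_zero])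
  by_cases h₂ : m₂ = M.zero
  · exact Or.inr (by rw [hm, h₂, M.smul_zero])
  exact Or.inl (hM m₁ m₂ h₁ h₂)

theorem sub_actsNormally_iff {N : Set M.carrier} (h : M.IsSubmod N) {a : A} :
    (M.sub N h).ActsNormally a ↔ ∀ m₁ ∈ N, ∀ m₂ ∈ N,
      M.smul a m₁ = M.smul a m₂ → m₁ = m₂ ∨ M.smul a m₁ = M.zero := by
  simp only [ActsNormally, sub, Subtype.forall, Subtype.ext_iff]

theorem quot_typeAlpha_of_compl_subsingleton {N : Set M.carrier} (h : M.IsSubmod N)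
    (hN : Nᶜ.Subsingleton) : (M.quot N h).TypeAlpha := by
  refine typeAlpha_of_nonzero_subsingleton fun ⟨x, hx⟩ ⟨y, hy⟩ hx0 hy0 => ?_
  have hxN : x ∉ N := hx.resolve_left fun hx => hx0 (Subtype.ext hx)
  have hyN : y ∉ N := hy.resolve_left fun hy => hy0 (Subtype.ext hy)
  exact Subtype.ext (hN hxN hyN)

end TypeAlpha

/-- `ℕᵐ⁰` is the monoid `𝔽₁⟨t⟩` with `t = exp 1`, so a module over it is a pointed set with
a pointed endomorphism `f`, the action of `t`. -/
abbrev ofEndo {X : Type u} (x₀ : X) (f : X → X) (hf : f x₀ = x₀) : FModule.{u} ℕᵐ⁰ where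
  carrier := X
  zero := x₀
  smul a x := if a = 0 then x₀ else f^[WithZero.log a] x
  one_smul _ := by simp
  mul_smul a b x := by
    by_cases ha : a = 0
    · simp [ha]
    by_cases hb : b = 0
    · simp [hb, Function.iterate_fixed hf]
    simp [ha, hb, WithZero.log_mul ha hb, Function.iterate_add_apply]
  zero_smul _ := if_pos rfl
  smul_zero a := by
    by_cases ha : a = 0
    · exact if_pos ha
    · exact (if_neg ha).trans (Function.iterate_fixed hf _)

theorem ofEndo_isSubmod {X : Type u} {x₀ : X} {f : X → X} (hf : f x₀ = x₀) {S : Set X}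
    (hx₀ : x₀ ∈ S) (hS : Set.MapsTo f S S) : (ofEndo x₀ f hf).IsSubmod S := by
  refine ⟨hx₀, fun a x hx => ?_⟩
  change (if a = 0 then x₀ else f^[WithZero.log a] x) ∈ S
  split_ifs
  exacts [hx₀, hS.iterate _ hx]

theorem ofEndo_smul_exp {X : Type u} (x₀ : X) (f : X → X) (hf : f x₀ = x₀) (n : ℕ) (x : X) :
    (ofEndo x₀ f hf).smul (WithZero.exp n) x = f^[n] x := by
  simp

end FModule

namespace FiveElementExample

inductive Point
  | zero | a | b | c | d
  deriving DecidableEq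

open Point

instance : Fintype Point :=
  ⟨{zero, a, b, c, d}, fun x => by cases x <;> decide⟩

def t : Point → Point
  | a => c
  | b => c
  | c => d
  | _ => zero

abbrev M : FModule.{0} ℕᵐ⁰ := FModule.ofEndo zero t rfl

def N : Set Point := {x | x ≠ b}

theorem smul_exp_one (x : Point) : M.smul (WithZero.exp 1) x = t x :=
  FModule.ofEndo_smul_exp zero t rfl 1 x

theorem t_mapsTo_N : Set.MapsTo t N N := by
  intro x _
  change t x ≠ b
  cases x <;> decide

theorem t_normal_of_ne_b : ∀ x y, x ≠ b → y ≠ b → t x = t y → x = y ∨ t x = zero := by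
  decide

theorem isSubmod_N : M.IsSubmod N :=
  FModule.ofEndo_isSubmod rfl (by decide : zero ≠ b) t_mapsTo_N

theorem sub_typeAlpha : (M.sub N isSubmod_N).TypeAlpha := by
  refine FModule.typeAlpha_of_closure_eq_top closure_zero_exp_one_eq_top ?_
  rintro s (rfl | rfl)
  · exact FModule.actsNormally_zero
  · rw [FModule.sub_actsNormally_iff]
    intro x hx y hy
    rw [smul_exp_one, smul_exp_one]
    exact t_normal_of_ne_b x y hx hy

theorem quot_typeAlpha : (M.quot N isSubmod_N).TypeAlpha :=
  FModule.quot_typeAlpha_of_compl_subsingleton isSubmod_N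
    fun _ hx _ hy => (not_not.1 hx).trans (not_not.1 hy).symm

theorem not_typeAlpha : ¬ M.TypeAlpha := by
  intro hα
  rcases hα (WithZero.exp 1) a b (by rw [smul_exp_one, smul_exp_one]; rfl) with hab | hzero
  · exact (by decide : a ≠ b) hab
  · rw [smul_exp_one] at hzero
    exact (by decide : c ≠ zero) hzero

end FiveElementExample

open FModule in
/-- There exist a finitely generated monoid `A` and an admissible short exact sequence
`0 → N → M → M/N → 0` of finite `A`-modules in which `N` and `M/N` are of type α
but `M` is not (e.g. `A = 𝔽₁⟨t⟩`, `M = {0,a,b,c,d}` with `t·a = t·b = c`, `t·c = d`,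
`t·d = 0`, and `N = {0,a,c,d}`). -/
theorem exists_non_typeAlpha_admissible_extension :
    ∃ (A : Type) (_ : MonoidWithZero A), Monoid.FG A ∧
      ∃ (M : FModule.{0} A) (_ : Finite M.carrier) (N : Set M.carrier)
        (h : M.IsSubmod N),
        -- `0 → N → M → M/N → 0` is an admissible short exact sequence:
        (∀ x, (inclHom M N h).toFun x = M.zero → x = (M.sub N h).zero) ∧
        {m | (projHom M N h).toFun m = (M.quot N h).zero} =
          Set.range (inclHom M N h).toFun ∧
        Function.Surjective (projHom M N h).toFun ∧
        (inclHom M N h).Normal ∧ (projHom M N h).Normal ∧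
        -- the sub and quotient are of type α, but the extension is not:
        (M.sub N h).TypeAlpha ∧ (M.quot N h).TypeAlpha ∧ ¬ M.TypeAlpha := by
  open FiveElementExample in
  refine ⟨ℕᵐ⁰, inferInstance, inferInstance, M, inferInstanceAs (Finite Point), N, isSubmod_N,
    fun _ => inclHom_eq_zero M N isSubmod_N, ker_projHom_eq_range_inclHom M N isSubmod_N,
    projHom_surjective M N isSubmod_N, inclHom_normal M N isSubmod_N,
    projHom_normal M N isSubmod_N, sub_typeAlpha, quot_typeAlpha, not_typeAlpha⟩
end

section
/- Let A be a commutative monoid and let 0 → M → L → N → 0 be an admissible short exact sequence of finitely generated A-modules. Then Supp(L) = Supp(M) ∪ Supp(N) as subsets of MSpec A. Consequently, A-modules whose support is contained in a fixed closed subset Z ⊆ MSpec A are closed under admissible extensions. -/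
universe u v

namespace FModule

variable {A : Type v} [MonoidWithZero A]

section Graded

variable {Γ : Type*} [AddCommMonoid Γ]

/-- `dA` is a `Γ`-grading of the monoid `A`: every nonzero element has a degree,
`1 ∈ A₀`, and `A_γ · A_δ ⊆ A_{γ+δ}`. -/
def IsMonoidGrading (dA : A → Γ) : Prop :=
  dA 1 = 0 ∧ ∀ a b : A, a * b ≠ 0 → dA (a * b) = dA a + dA b

/-- `g` is a grading of the `A`-module `M` compatible with the grading `dA` of `A`:
`0_M ∈ M₀` and `A_γ · M_δ ⊆ M_{γ+δ}`. -/
def IsGrading (dA : A → Γ) (M : FModule A) (g : M.carrier → Γ) : Prop :=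
  g M.zero = 0 ∧ ∀ (a : A) (m : M.carrier),
    M.smul a m ≠ M.zero → g (M.smul a m) = dA a + g m

/-- `M` admits a grading. -/
def AdmitsGrading (dA : A → Γ) (M : FModule A) : Prop :=
  ∃ g : M.carrier → Γ, IsGrading dA M g

end Graded

section Spec

/-- An ideal of a monoid. -/
def IsMonIdeal (I : Set A) : Prop := ∀ a ∈ I, ∀ b : A, b * a ∈ I

/-- A prime ideal of a monoid: a proper ideal with `xy ∈ p → x ∈ p ∨ y ∈ p`. -/
def IsPrimeIdeal (p : Set A) : Prop :=
  IsMonIdeal p ∧ p ≠ Set.univ ∧ ∀ x y : A, x * y ∈ p → x ∈ p ∨ y ∈ p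

variable (A) in
/-- The prime spectrum of the monoid `A`. -/
def MSpec := {p : Set A // IsPrimeIdeal p}

/-- The closed subset `V(I)` of `MSpec A` determined by a set `I ⊆ A`. -/
def zeroLocus (I : Set A) : Set (MSpec A) := {p | I ⊆ p.1}

/-- Closed subsets of `MSpec A`. -/
def IsClosedM (Z : Set (MSpec A)) : Prop := ∃ I : Set A, IsMonIdeal I ∧ Z = zeroLocus I

/-- The annihilator of an `A`-module. -/
def Ann (M : FModule A) : Set A := {a : A | ∀ m : M.carrier, M.smul a m = M.zero}

/-- The (scheme-theoretic) support of the module `M`: `Supp M = V(Ann M)`. -/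
def Supp (M : FModule A) : Set (MSpec A) := zeroLocus (Ann M)

/-- The radical of a set in a monoid. -/
def mradical (I : Set A) : Set A := {a : A | ∃ k : ℕ, 0 < k ∧ a ^ k ∈ I}

end Spec

end FModule
namespace FModule

variable {A : Type v} [MonoidWithZero A]

/-- A finitely generated `A`-module. -/
def IsFGMod (M : FModule A) : Prop :=
  ∃ G : Finset M.carrier, ∀ m : M.carrier,
    m = M.zero ∨ ∃ a : A, ∃ g ∈ G, m = M.smul a g

end FModule

open FModule in
/-- For a commutative monoid `A` and an admissible short exact sequence
`0 → M → L → N → 0` of finitely generated `A`-modules, `Supp L = Supp M ∪ Supp N`;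
consequently, modules with support contained in a fixed closed subset `Z ⊆ MSpec A`
are closed under admissible extensions. -/
theorem supp_of_admissible_extension {A : Type v} [CommMonoidWithZero A]
    (M L N : FModule A) (hM : IsFGMod M) (hL : IsFGMod L) (hN : IsFGMod N)
    (f : Hom M L) (g : Hom L N)
    (hexact_left : ∀ m, f.toFun m = L.zero → m = M.zero)
    (hexact_mid : {x | g.toFun x = N.zero} = Set.range f.toFun)
    (hexact_right : Function.Surjective g.toFun)
    (hnormal_f : f.Normal) (hnormal_g : g.Normal) :
    Supp L = Supp M ∪ Supp N ∧
    ∀ Z : Set (MSpec A), IsClosedM Z → Supp M ⊆ Z → Supp N ⊆ Z → Supp L ⊆ Z := by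
  -- Ann L ⊆ Ann M
  have hLM : Ann L ⊆ Ann M := by
    intro a ha m
    apply hexact_left
    rw [f.map_smul]
    exact ha _
  -- Ann L ⊆ Ann N
  have hLN : Ann L ⊆ Ann N := by
    intro a ha n
    obtain ⟨l, rfl⟩ := hexact_right n
    rw [← g.map_smul, ha, g.map_zero]
  -- products of annihilators annihilate L
  have hprod : ∀ a ∈ Ann M, ∀ b ∈ Ann N, a * b ∈ Ann L := by
    intro a ha b hb l
    have hker : g.toFun (L.smul b l) = N.zero := by
      rw [g.map_smul, hb]
    have : L.smul b l ∈ Set.range f.toFun := by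
      rw [← hexact_mid]; exact hker
    obtain ⟨m, hm⟩ := this
    rw [L.mul_smul, ← hm, ← f.map_smul, ha, f.map_zero]
  have hmain : Supp L = Supp M ∪ Supp N := by
    ext p
    constructor
    · intro hp
      by_contra hc
      rw [Set.mem_union] at hc
      push_neg at hc
      obtain ⟨hc1, hc2⟩ := hc
      simp only [Supp, zeroLocus, Set.mem_setOf_eq, Set.subset_def] at hc1 hc2 hp
      push_neg at hc1 hc2
      obtain ⟨a, ha, hap⟩ := hc1
      obtain ⟨b, hb, hbp⟩ := hc2
      have : a * b ∈ p.1 := hp _ (hprod a ha b hb)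
      rcases p.2.2.2 a b this with h | h
      · exact hap h
      · exact hbp h
    · rintro (hp | hp)
      · exact fun a ha => hp (hLM ha)
      · exact fun a ha => hp (hLN ha)
  refine ⟨hmain, fun Z _ hMZ hNZ => ?_⟩
  rw [hmain]
  exact Set.union_subset hMZ hNZ
end

section
/- Let A be a finitely generated monoid. The Hall algebra H_A — the ℚ-vector space of finitely supported functions on isomorphism classes of finite A-modules, with convolution product (f ⋆ g)(M) = Σ_{N ⊆ M} f(M/N) g(N), coproduct Δ(f)(M, N) = f(M ⊕ N), and grading by dimension — is a graded, connected, co-commutative bialgebra. -/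
universe u v

namespace FModule

variable (A : Type v) [MonoidWithZero A]

/-- A finite `A`-module, bundled. -/
def FinFMod := {M : FModule.{0} A // Finite M.carrier}

variable {A}

/-- The submodule, as a finite bundled module. -/
def FinFMod.sub (M : FinFMod A) (N : Set M.1.carrier) (h : M.1.IsSubmod N) : FinFMod A :=
  ⟨M.1.sub N h, by haveI := M.2; exact inferInstanceAs (Finite ↥N)⟩

/-- The quotient, as a finite bundled module. -/
noncomputable def FinFMod.quot (M : FinFMod A) (N : Set M.1.carrier) (h : M.1.IsSubmod N) :
    FinFMod A :=
  ⟨M.1.quot N h, by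
    haveI := M.2
    exact inferInstanceAs (Finite {x : M.1.carrier // x = M.1.zero ∨ x ∉ N})⟩

/-- The wedge sum, as a finite bundled module. -/
def FinFMod.wedge (M N : FinFMod A) : FinFMod A :=
  ⟨M.1.wedge N.1, by
    haveI := M.2; haveI := N.2
    exact inferInstanceAs
      (Finite {p : M.1.carrier × N.1.carrier // p.1 = M.1.zero ∨ p.2 = N.1.zero})⟩

/-- The zero module. -/
def FinFMod.zeroMod : FinFMod A :=
  ⟨⟨PUnit, PUnit.unit, fun _ _ => PUnit.unit, fun _ => rfl, fun _ _ _ => rfl,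
    fun _ => rfl, fun _ => rfl⟩, inferInstance⟩

variable (A)

/-- Isomorphism classes of finite `A`-modules. -/
instance fmodSetoid : Setoid (FinFMod A) where
  r M N := Nonempty (Iso M.1 N.1)
  iseqv := ⟨fun M => ⟨Iso.refl M.1⟩, fun ⟨e⟩ => ⟨e.symm⟩, fun ⟨e⟩ ⟨f⟩ => ⟨e.trans f⟩⟩

/-- The set of isomorphism classes of finite `A`-modules. -/
def IsoCl := Quotient (fmodSetoid A)

variable {A}

/-- The isomorphism class of a finite module. -/
def clsOf (M : FinFMod A) : IsoCl A := Quotient.mk _ M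

/-- The collection of submodules of a module. -/
def Submods (M : FModule A) := {N : Set M.carrier // M.IsSubmod N}

open scoped Classical in
/-- The Hall algebra convolution product:
`(f ⋆ g)(M) = ∑_{N ⊆ M} f(M/N) g(N)`, the (finite) sum being over all submodules. -/
noncomputable def hallMul (f g : IsoCl A → ℚ) : IsoCl A → ℚ := fun c =>
  ∑ᶠ N : Submods (Quotient.out c).1,
    f (clsOf ((Quotient.out c).quot N.1 N.2)) * g (clsOf ((Quotient.out c).sub N.1 N.2))

open scoped Classical in
/-- The delta function supported at a single isomorphism class. -/
noncomputable def deltaF (c : IsoCl A) : IsoCl A → ℚ := fun d => if d = c then 1 else 0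

/-- Finitely supported functions (the underlying space of the Hall algebra). -/
def FinSupp (f : IsoCl A → ℚ) : Prop := (Function.support f).Finite

/-- Finitely supported functions of two variables. -/
def FinSupp₂ (F : IsoCl A → IsoCl A → ℚ) : Prop :=
  (Function.support (Function.uncurry F)).Finite

/-- The Hall algebra coproduct, in coordinates: `Δ(f)(M, N) = f(M ⊕ N)`. -/
noncomputable def coprodF (f : IsoCl A → ℚ) : IsoCl A → IsoCl A → ℚ := fun c d =>
  f (clsOf ((Quotient.out c).wedge (Quotient.out d)))

/-- The componentwise convolution product on two-variable functions
(the product on `H ⊗ H` in coordinates). -/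
noncomputable def hallMul₂ (F G : IsoCl A → IsoCl A → ℚ) : IsoCl A → IsoCl A → ℚ :=
  fun c d =>
    ∑ᶠ N : Submods (Quotient.out c).1, ∑ᶠ P : Submods (Quotient.out d).1,
      F (clsOf ((Quotient.out c).quot N.1 N.2)) (clsOf ((Quotient.out d).quot P.1 P.2)) *
      G (clsOf ((Quotient.out c).sub N.1 N.2)) (clsOf ((Quotient.out d).sub P.1 P.2))

/-- The dimension of an isomorphism class: `dim M = |M| - 1`. -/
noncomputable def dimCl (c : IsoCl A) : ℕ := Nat.card (Quotient.out c).1.carrier - 1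

/-- The counit: evaluation at the class of the zero module. -/
noncomputable def counitF (f : IsoCl A → ℚ) : ℚ := f (clsOf (FinFMod.zeroMod))

end FModule

/-!
Every axiom is an identity between finite sums over submodules, proved by reindexing the sum
along a bijection of submodule data and matching the summands up to isomorphism. For
associativity both sides become sums over chains `N ⊆ B ⊆ M`: by the correspondence theorem the
submodules of `M/N` are the `B ⊇ N`, and `(M/N)/(B/N) ≅ M/B`, while `B/N` has the same class
whether it is viewed inside `M/N` or as a quotient of `B`. For compatibility with `Δ`, the
submodules of `C ⊕ D` are the `N ⊕ P`, with `(C ⊕ D)/(N ⊕ P) ≅ C/N ⊕ D/P`. The grading comes from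
`|M/N| + |N| = |M| + 1` and `|M ⊕ N| + 1 = |M| + |N|`. Supports stay finite because each degree
contains finitely many classes: transported to `Fin k`, a module with `k` elements is determined
up to isomorphism by its basepoint and the action of a finite generating set of `A`.
-/

namespace FModule

variable {A : Type v} [MonoidWithZero A]

-- The carriers of these constructions are subtypes; unfolding them at reducible transparency lets
-- `rw` and `simp` treat their elements as elements of those subtypes.
attribute [reducible] sub quot wedge FinFMod.sub FinFMod.quot FinFMod.wedge

section Submodules

variable {M N : FModule A}

lemma isSubmod_univ (M : FModule A) : M.IsSubmod Set.univ :=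
  ⟨trivial, fun _ _ _ => trivial⟩

lemma isSubmod_singleton_zero (M : FModule A) : M.IsSubmod {M.zero} :=
  ⟨rfl, fun a m hm => by rw [Set.mem_singleton_iff.mp hm, M.smul_zero]; rfl⟩

lemma IsSubmod.preimage (f : Hom M N) {P : Set N.carrier} (hP : N.IsSubmod P) :
    M.IsSubmod (f.toFun ⁻¹' P) :=
  ⟨by rw [Set.mem_preimage, f.map_zero]; exact hP.1,
    fun a m hm => by rw [Set.mem_preimage, f.map_smul]; exact hP.2 a _ hm⟩

lemma IsSubmod.image (f : Hom M N) {P : Set M.carrier} (hP : M.IsSubmod P) :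
    N.IsSubmod (f.toFun '' P) :=
  ⟨⟨M.zero, hP.1, f.map_zero⟩, by
    rintro a _ ⟨m, hm, rfl⟩
    exact ⟨_, hP.2 a m hm, f.map_smul a m⟩⟩

def subtypeHom (M : FModule A) (P : Set M.carrier) (h : M.IsSubmod P) : Hom (M.sub P h) M :=
  ⟨Subtype.val, rfl, fun _ _ => rfl⟩

open Classical in
lemma coe_quot_smul {P : Set M.carrier} (h : M.IsSubmod P) (a : A) (q : (M.quot P h).carrier) :
    ((M.quot P h).smul a q).1 = if M.smul a q.1 ∈ P then M.zero else M.smul a q.1 :=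
  apply_dite Subtype.val _ _ _

open Classical in
noncomputable def quotProj (M : FModule A) (P : Set M.carrier) (h : M.IsSubmod P) :
    Hom M (M.quot P h) where
  toFun x := ⟨if x ∈ P then M.zero else x, by split_ifs with hx; exacts [Or.inl rfl, Or.inr hx]⟩
  map_zero := Subtype.ext (if_pos h.1)
  map_smul a x := by
    apply Subtype.ext
    rw [coe_quot_smul]
    by_cases hx : x ∈ P
    · have ha0 : M.smul a M.zero ∈ P := by rw [M.smul_zero]; exact h.1
      simp only [if_pos hx, if_pos (h.2 a x hx), if_pos ha0]
    · simp only [if_neg hx]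

open Classical in
lemma coe_quotProj {P : Set M.carrier} (h : M.IsSubmod P) (x : M.carrier) :
    ((quotProj M P h).toFun x).1 = if x ∈ P then M.zero else x := rfl

lemma quotProj_of_mem {P : Set M.carrier} (h : M.IsSubmod P) {x : M.carrier} (hx : x ∈ P) :
    (quotProj M P h).toFun x = (M.quot P h).zero := by
  classical
  exact Subtype.ext ((coe_quotProj h x).trans (if_pos hx))

lemma quotProj_coe {P : Set M.carrier} (h : M.IsSubmod P) (q : (M.quot P h).carrier) :
    (quotProj M P h).toFun q.1 = q := by
  apply Subtype.ext
  rw [coe_quotProj]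
  split_ifs with hq
  · exact (q.2.resolve_right (not_not.mpr hq)).symm
  · rfl

end Submodules

namespace Iso

variable {M N : FModule A}

def toHom (e : Iso M N) : Hom M N := ⟨e.toEquiv, e.map_zero, e.map_smul⟩

lemma apply_eq_zero_iff (e : Iso M N) {x : M.carrier} : e.toEquiv x = N.zero ↔ x = M.zero := by
  rw [← e.map_zero, e.toEquiv.apply_eq_iff_eq]

def subCongr (e : Iso M N) {P : Set M.carrier} (h : M.IsSubmod P) :
    Iso (M.sub P h) (N.sub (e.toEquiv '' P) (h.image e.toHom)) where
  toEquiv := e.toEquiv.image P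
  map_zero := Subtype.ext e.map_zero
  map_smul a m := Subtype.ext (e.map_smul a m.1)

open Classical in
noncomputable def quotCongr (e : Iso M N) {P : Set M.carrier} (h : M.IsSubmod P) :
    Iso (M.quot P h) (N.quot (e.toEquiv '' P) (h.image e.toHom)) where
  toEquiv := e.toEquiv.subtypeEquiv fun x => by
    rw [e.apply_eq_zero_iff, e.toEquiv.injective.mem_set_image]
  map_zero := Subtype.ext e.map_zero
  map_smul a m := by
    apply Subtype.ext
    simp only [Equiv.subtypeEquiv_apply, ← e.map_smul, e.toEquiv.injective.mem_set_image]
    split_ifs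
    · exact e.map_zero
    · rfl

def submodsEquiv (e : Iso M N) : Submods M ≃ Submods N where
  toFun P := ⟨e.toEquiv '' P.1, P.2.image e.toHom⟩
  invFun Q := ⟨e.toEquiv.symm '' Q.1, Q.2.image e.symm.toHom⟩
  left_inv P := Subtype.ext (e.toEquiv.symm_image_image P.1)
  right_inv Q := Subtype.ext (e.toEquiv.image_symm_image Q.1)

end Iso

section Cardinality

variable {M N : FModule A}

instance [Finite M.carrier] : Finite (Submods M) :=
  inferInstanceAs (Finite {P : Set M.carrier // M.IsSubmod P})

instance [Finite M.carrier] {P : Set M.carrier} (h : M.IsSubmod P) : Finite (M.sub P h).carrier :=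
  inferInstanceAs (Finite P)

instance [Finite M.carrier] {P : Set M.carrier} (h : M.IsSubmod P) :
    Finite (M.quot P h).carrier :=
  inferInstanceAs (Finite {x : M.carrier // x = M.zero ∨ x ∉ P})

instance [Finite M.carrier] [Finite N.carrier] : Finite (M.wedge N).carrier :=
  inferInstanceAs (Finite {p : M.carrier × N.carrier // p.1 = M.zero ∨ p.2 = N.zero})

lemma one_le_card (M : FModule A) [Finite M.carrier] : 1 ≤ Nat.card M.carrier :=
  Nat.card_pos_iff.mpr ⟨⟨M.zero⟩, inferInstance⟩

lemma card_quot_add_card_sub (M : FModule A) [Finite M.carrier] {P : Set M.carrier}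
    (h : M.IsSubmod P) :
    Nat.card (M.quot P h).carrier + Nat.card (M.sub P h).carrier = Nat.card M.carrier + 1 := by
  have hquot : Nat.card (M.quot P h).carrier = (insert M.zero Pᶜ).ncard := by
    rw [← Nat.card_coe_set_eq]; rfl
  rw [hquot, Set.ncard_insert_of_notMem (by simpa using h.1), sub, Nat.card_coe_set_eq,
    add_right_comm, Set.ncard_compl_add_ncard]

open Classical in
noncomputable def wedgeEquivSum (M N : FModule A) :
    (M.wedge N).carrier ≃ {x : M.carrier // x ≠ M.zero} ⊕ N.carrier where
  toFun p := if h : p.1.1 = M.zero then .inr p.1.2 else .inl ⟨p.1.1, h⟩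
  invFun := Sum.elim (fun x => ⟨(x.1, N.zero), Or.inr rfl⟩) (fun y => ⟨(M.zero, y), Or.inl rfl⟩)
  left_inv := by
    rintro ⟨⟨x, y⟩, hp⟩
    by_cases hx : x = M.zero
    · subst hx; simp
    · obtain rfl : y = N.zero := hp.resolve_left hx
      simp [hx]
  right_inv := by
    rintro (x | y)
    · simp [x.2]
    · simp

lemma card_wedge_add_one (M N : FModule A) [Finite M.carrier] [Finite N.carrier] :
    Nat.card (M.wedge N).carrier + 1 = Nat.card M.carrier + Nat.card N.carrier := by
  classical
  rw [Nat.card_congr (wedgeEquivSum M N), Nat.card_sum, add_right_comm, ← Finite.card_option,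
    Nat.card_congr (Equiv.optionSubtypeNe M.zero)]

end Cardinality

section Classes

lemma clsOf_out (c : IsoCl A) : clsOf (Quotient.out c) = c := Quotient.out_eq c

lemma Iso.clsOf_eq {M N : FinFMod A} (e : Iso M.1 N.1) : clsOf M = clsOf N := Quotient.sound ⟨e⟩

noncomputable def outIso (M : FinFMod A) : Iso (Quotient.out (clsOf M)).1 M.1 :=
  Classical.choice (Quotient.mk_out (s := fmodSetoid A) M)

lemma dimCl_clsOf (M : FinFMod A) : dimCl (clsOf M) = Nat.card M.1.carrier - 1 := by
  rw [dimCl, Nat.card_congr (outIso M).toEquiv]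

noncomputable def isoZeroOfSubsingleton (M : FModule A) [Subsingleton M.carrier] :
    Iso M (FinFMod.zeroMod (A := A)).1 where
  toEquiv := @Equiv.equivPUnit _ (uniqueOfSubsingleton M.zero)
  map_zero := rfl
  map_smul _ _ := rfl

lemma clsOf_eq_zero_iff (M : FinFMod A) :
    clsOf M = clsOf FinFMod.zeroMod ↔ Subsingleton M.1.carrier := by
  refine ⟨fun h => ?_, fun _ => (isoZeroOfSubsingleton M.1).clsOf_eq⟩
  obtain ⟨e⟩ := Quotient.exact h
  have : Subsingleton (FinFMod.zeroMod (A := A)).1.carrier := inferInstanceAs (Subsingleton PUnit)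
  exact e.toEquiv.subsingleton

lemma subsingleton_sub_iff {M : FModule A} {P : Set M.carrier} (h : M.IsSubmod P) :
    Subsingleton (M.sub P h).carrier ↔ P = {M.zero} := by
  rw [subsingleton_iff]
  refine ⟨fun hs => ?_, ?_⟩
  · ext x
    exact ⟨fun hx => congrArg Subtype.val (hs ⟨x, hx⟩ ⟨M.zero, h.1⟩), fun hx => hx ▸ h.1⟩
  · rintro rfl ⟨x, hx⟩ ⟨y, hy⟩
    exact Subtype.ext (hx.trans hy.symm)

lemma subsingleton_quot_iff {M : FModule A} {P : Set M.carrier} (h : M.IsSubmod P) :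
    Subsingleton (M.quot P h).carrier ↔ P = Set.univ := by
  rw [subsingleton_iff]
  refine ⟨fun hs => Set.eq_univ_of_forall fun x => ?_, ?_⟩
  · by_contra hx
    have hx0 : x = M.zero := congrArg Subtype.val (hs ⟨x, Or.inr hx⟩ ⟨M.zero, Or.inl rfl⟩)
    exact hx (hx0 ▸ h.1)
  · rintro rfl ⟨x, hx⟩ ⟨y, hy⟩
    simp only [Set.mem_univ, not_true_eq_false, or_false] at hx hy
    exact Subtype.ext (hx.trans hy.symm)

lemma subsingleton_wedge_iff {M N : FModule A} :
    Subsingleton (M.wedge N).carrier ↔ Subsingleton M.carrier ∧ Subsingleton N.carrier := by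
  simp only [subsingleton_iff]
  refine ⟨fun hs => ⟨fun x y => ?_, fun x y => ?_⟩, fun ⟨hM, hN⟩ p q => ?_⟩
  · exact congrArg (·.1.1) (hs ⟨(x, N.zero), Or.inr rfl⟩ ⟨(y, N.zero), Or.inr rfl⟩)
  · exact congrArg (·.1.2) (hs ⟨(M.zero, x), Or.inl rfl⟩ ⟨(M.zero, y), Or.inl rfl⟩)
  · exact Subtype.ext (Prod.ext (hM _ _) (hN _ _))

lemma exists_clsOf_eq (c : IsoCl A) : ∃ M : FinFMod A, clsOf M = c := ⟨_, clsOf_out c⟩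

end Classes

section Unit

lemma hallMul_clsOf (f g : IsoCl A → ℚ) (M : FinFMod A) :
    hallMul f g (clsOf M) =
      ∑ᶠ N : Submods M.1, f (clsOf (M.quot N.1 N.2)) * g (clsOf (M.sub N.1 N.2)) := by
  let e := outIso M
  rw [hallMul, ← finsum_comp_equiv e.submodsEquiv]
  refine finsum_congr fun N => congrArg₂ (· * ·) (congrArg f ?_) (congrArg g ?_)
  · exact (e.quotCongr N.2).clsOf_eq
  · exact (e.subCongr N.2).clsOf_eq

lemma deltaF_self (c : IsoCl A) : deltaF c c = 1 := by
  simp [deltaF]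

lemma deltaF_eq_zero_iff {c d : IsoCl A} : deltaF c d = 0 ↔ d ≠ c := by
  simp [deltaF]

def subUnivIso (M : FModule A) : Iso (M.sub Set.univ (isSubmod_univ M)) M :=
  ⟨Equiv.Set.univ _, rfl, fun _ _ => rfl⟩

noncomputable def quotZeroIso (M : FModule A) :
    Iso (M.quot {M.zero} (isSubmod_singleton_zero M)) M where
  toEquiv := Equiv.subtypeUnivEquiv fun x => or_iff_not_imp_left.mpr id
  map_zero := rfl
  map_smul a m := by
    classical
    show ((M.quot _ _).smul a m).1 = M.smul a m.1
    rw [coe_quot_smul, ite_eq_right_iff]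
    exact fun h => h.symm

lemma hallMul_deltaF_zero_left (f : IsoCl A → ℚ) :
    hallMul (deltaF (clsOf FinFMod.zeroMod)) f = f := by
  funext c
  obtain ⟨M, rfl⟩ := exists_clsOf_eq c
  rw [hallMul_clsOf, finsum_eq_single _ ⟨Set.univ, isSubmod_univ M.1⟩]
  · have hzero : clsOf (M.quot Set.univ (isSubmod_univ M.1)) = clsOf FinFMod.zeroMod :=
      (clsOf_eq_zero_iff _).mpr ((subsingleton_quot_iff (isSubmod_univ M.1)).mpr rfl)
    rw [hzero, deltaF_self, one_mul]
    exact congrArg f (subUnivIso M.1).clsOf_eq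
  · intro N hN
    rw [deltaF_eq_zero_iff.mpr, zero_mul]
    rw [Ne, clsOf_eq_zero_iff, subsingleton_quot_iff N.2]
    exact fun h => hN (Subtype.ext h)

lemma hallMul_deltaF_zero_right (f : IsoCl A → ℚ) :
    hallMul f (deltaF (clsOf FinFMod.zeroMod)) = f := by
  funext c
  obtain ⟨M, rfl⟩ := exists_clsOf_eq c
  rw [hallMul_clsOf, finsum_eq_single _ ⟨{M.1.zero}, isSubmod_singleton_zero M.1⟩]
  · have hzero : clsOf (M.sub {M.1.zero} (isSubmod_singleton_zero M.1)) = clsOf FinFMod.zeroMod :=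
      (clsOf_eq_zero_iff _).mpr ((subsingleton_sub_iff (isSubmod_singleton_zero M.1)).mpr rfl)
    rw [hzero, deltaF_self, mul_one]
    exact congrArg f (quotZeroIso M.1).clsOf_eq
  · intro N hN
    rw [deltaF_eq_zero_iff.mpr, mul_zero]
    rw [Ne, clsOf_eq_zero_iff, subsingleton_sub_iff N.2]
    exact fun h => hN (Subtype.ext h)

instance : Unique (Submods (FinFMod.zeroMod (A := A)).1) where
  default := ⟨Set.univ, isSubmod_univ _⟩
  uniq N := Subtype.ext (Set.eq_univ_of_forall fun _ => N.2.1)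

lemma counitF_hallMul (f g : IsoCl A → ℚ) :
    counitF (hallMul f g) = counitF f * counitF g := by
  have : Subsingleton (FinFMod.zeroMod (A := A)).1.carrier := inferInstanceAs (Subsingleton PUnit)
  rw [counitF, hallMul_clsOf, finsum_unique]
  congr 2 <;> exact (clsOf_eq_zero_iff _).mpr inferInstance

end Unit

section Grading

lemma exists_dimCl_eq_add_of_hallMul_ne_zero {f g : IsoCl A → ℚ} {c : IsoCl A}
    (h : hallMul f g c ≠ 0) : ∃ a b, f a ≠ 0 ∧ g b ≠ 0 ∧ dimCl c = dimCl a + dimCl b := by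
  obtain ⟨M, rfl⟩ := exists_clsOf_eq c
  rw [hallMul_clsOf] at h
  obtain ⟨N, hN⟩ : ∃ N : Submods M.1,
      f (clsOf (M.quot N.1 N.2)) * g (clsOf (M.sub N.1 N.2)) ≠ 0 := by
    by_contra! hall
    exact h (finsum_eq_zero_of_forall_eq_zero hall)
  refine ⟨_, _, left_ne_zero_of_mul hN, right_ne_zero_of_mul hN, ?_⟩
  have := M.2
  have hcard := card_quot_add_card_sub M.1 N.2
  have := one_le_card (M.1.quot N.1 N.2)
  have := one_le_card (M.1.sub N.1 N.2)
  simp only [dimCl_clsOf]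
  change Nat.card M.1.carrier - 1 =
    (Nat.card (M.1.quot N.1 N.2).carrier - 1) + (Nat.card (M.1.sub N.1 N.2).carrier - 1)
  omega

lemma dimCl_eq_add_of_hallMul_deltaF_ne_zero {c d e : IsoCl A}
    (h : hallMul (deltaF c) (deltaF d) e ≠ 0) : dimCl e = dimCl c + dimCl d := by
  obtain ⟨a, b, ha, hb, hab⟩ := exists_dimCl_eq_add_of_hallMul_ne_zero h
  rw [Ne, deltaF_eq_zero_iff, not_not] at ha hb
  rwa [← ha, ← hb]

def Iso.ofMapSmulGenerators {M N : FModule A} {S : Set A} (hS : Submonoid.closure S = ⊤)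
    (e : M.carrier ≃ N.carrier) (h0 : e M.zero = N.zero)
    (hs : ∀ s ∈ S, ∀ m, e (M.smul s m) = N.smul s (e m)) : Iso M N where
  toEquiv := e
  map_zero := h0
  map_smul a := by
    have ha : a ∈ Submonoid.closure S := hS ▸ Submonoid.mem_top a
    induction ha using Submonoid.closure_induction with
    | mem s hs' => exact hs s hs'
    | one => intro m; rw [M.one_smul, N.one_smul]
    | mul b c _ _ hb hc => intro m; rw [M.mul_smul, N.mul_smul, hb, hc]

lemma finite_setOf_card_eq [Monoid.FG A] (k : ℕ) :
    {c : IsoCl A | Nat.card (Quotient.out c).1.carrier = k}.Finite := by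
  obtain ⟨S, hS⟩ := Monoid.FG.fg_top (M := A)
  rw [← Set.finite_coe_iff]
  let enum (c : {c : IsoCl A | Nat.card (Quotient.out c).1.carrier = k}) :
      (Quotient.out c.1).1.carrier ≃ Fin k :=
    have := (Quotient.out c.1).2
    (Finite.equivFin _).trans (finCongr c.2)
  refine Finite.of_injective (fun c => (enum c (Quotient.out c.1).1.zero,
    fun (s : S) i => enum c ((Quotient.out c.1).1.smul s ((enum c).symm i)))) fun c d hcd => ?_
  simp only [Prod.mk.injEq, funext_iff] at hcd
  obtain ⟨h0, hs⟩ := hcd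
  let e := Iso.ofMapSmulGenerators hS ((enum c).trans (enum d).symm)
    (by simp [h0]) fun s hs' m => by simpa using congrArg (enum d).symm (hs ⟨s, hs'⟩ (enum c m))
  rw [Subtype.ext_iff, ← clsOf_out c.1, ← clsOf_out d.1]
  exact e.clsOf_eq

lemma finite_setOf_dimCl_le [Monoid.FG A] (n : ℕ) : {c : IsoCl A | dimCl c ≤ n}.Finite := by
  refine ((Set.finite_Iic (n + 1)).biUnion fun k _ => finite_setOf_card_eq k).subset
    fun c (hc : dimCl c ≤ n) => Set.mem_biUnion (x := Nat.card (Quotient.out c).1.carrier) ?_ rfl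
  exact Set.mem_Iic.mpr (by rw [dimCl] at hc; omega)

lemma finSupp_hallMul [Monoid.FG A] {f g : IsoCl A → ℚ} (hf : FinSupp f) (hg : FinSupp g) :
    FinSupp (hallMul f g) := by
  obtain ⟨m, hm⟩ := (hf.image dimCl).bddAbove
  obtain ⟨k, hk⟩ := (hg.image dimCl).bddAbove
  refine (finite_setOf_dimCl_le (m + k)).subset fun c hc => ?_
  obtain ⟨a, b, ha, hb, hab⟩ := exists_dimCl_eq_add_of_hallMul_ne_zero hc
  have := hm ⟨a, ha, rfl⟩
  have := hk ⟨b, hb, rfl⟩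
  show dimCl c ≤ m + k
  omega

lemma eq_clsOf_zeroMod_of_dimCl_eq_zero {c : IsoCl A} (h : dimCl c = 0) :
    c = clsOf FinFMod.zeroMod := by
  obtain ⟨M, rfl⟩ := exists_clsOf_eq c
  rw [dimCl_clsOf] at h
  have := M.2
  exact (clsOf_eq_zero_iff M).mpr (Finite.card_le_one_iff_subsingleton.mp (by omega))

end Grading

section Wedge

def Iso.wedgeCongr {M M' N N' : FModule A} (e : Iso M M') (f : Iso N N') :
    Iso (M.wedge N) (M'.wedge N') where
  toEquiv := (e.toEquiv.prodCongr f.toEquiv).subtypeEquiv fun p => by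
    simp only [Equiv.prodCongr_apply, Prod.map, e.apply_eq_zero_iff, f.apply_eq_zero_iff]
  map_zero := Subtype.ext (Prod.ext e.map_zero f.map_zero)
  map_smul a m := Subtype.ext (Prod.ext (e.map_smul a m.1.1) (f.map_smul a m.1.2))

def wedgeComm (M N : FModule A) : Iso (M.wedge N) (N.wedge M) :=
  ⟨(Equiv.prodComm _ _).subtypeEquiv fun _ => or_comm, rfl, fun _ _ => rfl⟩

def wedgeAssoc (M N P : FModule A) : Iso ((M.wedge N).wedge P) (M.wedge (N.wedge P)) where
  toEquiv := {
    toFun := fun p => ⟨(p.1.1.1.1, ⟨(p.1.1.1.2, p.1.2), by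
        rcases p.2 with h | h
        · exact Or.inl (congrArg (·.1.2) h)
        · exact Or.inr h⟩), by
      rcases p.2 with h | h
      · exact Or.inl (congrArg (·.1.1) h)
      · rcases p.1.1.2 with h1 | h1
        · exact Or.inl h1
        · exact Or.inr (Subtype.ext (Prod.ext h1 h))⟩
    invFun := fun p => ⟨(⟨(p.1.1, p.1.2.1.1), by
        rcases p.2 with h | h
        · exact Or.inl h
        · exact Or.inr (congrArg (·.1.1) h)⟩, p.1.2.1.2), by
      rcases p.2 with h | h
      · rcases p.1.2.2 with h1 | h1
        · exact Or.inl (Subtype.ext (Prod.ext h h1))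
        · exact Or.inr h1
      · exact Or.inr (congrArg (·.1.2) h)⟩
    left_inv := fun _ => rfl
    right_inv := fun _ => rfl }
  map_zero := rfl
  map_smul _ _ := rfl

def zeroWedgeIso (N : FModule A) : Iso ((FinFMod.zeroMod (A := A)).1.wedge N) N where
  toEquiv := {
    toFun := fun p => p.1.2
    invFun := fun n => ⟨(PUnit.unit, n), Or.inl rfl⟩
    left_inv := fun _ => rfl
    right_inv := fun _ => rfl }
  map_zero := rfl
  map_smul _ _ := rfl

lemma coprodF_clsOf (f : IsoCl A → ℚ) (M N : FinFMod A) :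
    coprodF f (clsOf M) (clsOf N) = f (clsOf (M.wedge N)) :=
  congrArg f ((outIso M).wedgeCongr (outIso N)).clsOf_eq

lemma coprodF_comm (f : IsoCl A → ℚ) (c d : IsoCl A) : coprodF f c d = coprodF f d c :=
  congrArg f (wedgeComm _ _).clsOf_eq

lemma coprodF_assoc (f : IsoCl A → ℚ) (a b c : IsoCl A) :
    coprodF (fun x => coprodF f x c) a b = coprodF (fun x => coprodF f a x) b c := by
  obtain ⟨M, rfl⟩ := exists_clsOf_eq a
  obtain ⟨N, rfl⟩ := exists_clsOf_eq b
  obtain ⟨P, rfl⟩ := exists_clsOf_eq c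
  simp only [coprodF_clsOf]
  exact congrArg f (wedgeAssoc M.1 N.1 P.1).clsOf_eq

lemma coprodF_zero_left (f : IsoCl A → ℚ) (c : IsoCl A) :
    coprodF f (clsOf FinFMod.zeroMod) c = f c := by
  obtain ⟨M, rfl⟩ := exists_clsOf_eq c
  rw [coprodF_clsOf]
  exact congrArg f (zeroWedgeIso M.1).clsOf_eq

lemma coprodF_zero_right (f : IsoCl A → ℚ) (c : IsoCl A) :
    coprodF f c (clsOf FinFMod.zeroMod) = f c := by
  rw [coprodF_comm, coprodF_zero_left]

lemma coprodF_deltaF_zero (c d : IsoCl A) :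
    coprodF (deltaF (clsOf FinFMod.zeroMod)) c d =
      deltaF (clsOf FinFMod.zeroMod) c * deltaF (clsOf FinFMod.zeroMod) d := by
  obtain ⟨M, rfl⟩ := exists_clsOf_eq c
  obtain ⟨N, rfl⟩ := exists_clsOf_eq d
  have hwedge : clsOf (M.wedge N) = clsOf FinFMod.zeroMod ↔
      clsOf M = clsOf FinFMod.zeroMod ∧ clsOf N = clsOf FinFMod.zeroMod := by
    simp only [clsOf_eq_zero_iff]
    exact subsingleton_wedge_iff
  rw [coprodF_clsOf]
  by_cases hM : clsOf M = clsOf FinFMod.zeroMod <;>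
    by_cases hN : clsOf N = clsOf FinFMod.zeroMod <;> simp [deltaF, hwedge, hM, hN]

lemma dimCl_clsOf_wedge (M N : FinFMod A) :
    dimCl (clsOf (M.wedge N)) = dimCl (clsOf M) + dimCl (clsOf N) := by
  have := M.2
  have := N.2
  have hcard := card_wedge_add_one M.1 N.1
  have := one_le_card M.1
  have := one_le_card N.1
  simp only [dimCl_clsOf]
  change Nat.card (M.1.wedge N.1).carrier - 1 = _
  omega

end Wedge

section Compatibility

variable {C D : FModule A}

def inlHom (C D : FModule A) : Hom C (C.wedge D) :=
  ⟨fun x => ⟨(x, D.zero), Or.inr rfl⟩, rfl,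
    fun a _ => Subtype.ext (Prod.ext rfl (D.smul_zero a).symm)⟩

def inrHom (C D : FModule A) : Hom D (C.wedge D) :=
  ⟨fun y => ⟨(C.zero, y), Or.inl rfl⟩, rfl,
    fun a _ => Subtype.ext (Prod.ext (C.smul_zero a).symm rfl)⟩

def pairSet (N : Set C.carrier) (P : Set D.carrier) : Set (C.wedge D).carrier :=
  {p | p.1.1 ∈ N ∧ p.1.2 ∈ P}

lemma IsSubmod.pair {N : Set C.carrier} {P : Set D.carrier} (hN : C.IsSubmod N)
    (hP : D.IsSubmod P) : (C.wedge D).IsSubmod (pairSet N P) :=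
  ⟨⟨hN.1, hP.1⟩, fun a _ hp => ⟨hN.2 a _ hp.1, hP.2 a _ hp.2⟩⟩

def submodsWedgeEquiv (C D : FModule A) : Submods (C.wedge D) ≃ Submods C × Submods D where
  toFun R := (⟨_, R.2.preimage (inlHom C D)⟩, ⟨_, R.2.preimage (inrHom C D)⟩)
  invFun NP := ⟨_, NP.1.2.pair NP.2.2⟩
  left_inv R := by
    refine Subtype.ext (Set.ext fun p => ?_)
    rcases p with ⟨⟨x, y⟩, hx | hy⟩
    · obtain rfl : x = C.zero := hx
      exact ⟨fun h => h.2, fun h => ⟨R.2.1, h⟩⟩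
    · obtain rfl : y = D.zero := hy
      exact ⟨fun h => h.1, fun h => ⟨h, R.2.1⟩⟩
  right_inv NP := Prod.ext (Subtype.ext (Set.ext fun _ => and_iff_left NP.2.2.1))
    (Subtype.ext (Set.ext fun _ => and_iff_right NP.1.2.1))

def wedgeSubIso (N : Submods C) (P : Submods D) :
    Iso ((C.wedge D).sub _ (N.2.pair P.2)) ((C.sub N.1 N.2).wedge (D.sub P.1 P.2)) where
  toEquiv := {
    toFun := fun p => ⟨(⟨p.1.1.1, p.2.1⟩, ⟨p.1.1.2, p.2.2⟩), p.1.2.imp Subtype.ext Subtype.ext⟩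
    invFun := fun q => ⟨⟨(q.1.1.1, q.1.2.1),
      q.2.imp (congrArg Subtype.val) (congrArg Subtype.val)⟩, ⟨q.1.1.2, q.1.2.2⟩⟩
    left_inv := fun _ => rfl
    right_inv := fun _ => rfl }
  map_zero := rfl
  map_smul _ _ := rfl

lemma fst_mem_quot_pair (N : Submods C) (P : Submods D)
    (q : ((C.wedge D).quot _ (N.2.pair P.2)).carrier) : q.1.1.1 = C.zero ∨ q.1.1.1 ∉ N.1 := by
  rcases q with ⟨⟨⟨x, y⟩, hx | hy⟩, hq | hq⟩
  · exact Or.inl hx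
  · exact Or.inl hx
  · exact Or.inl (congrArg (·.1.1) hq)
  · obtain rfl : y = D.zero := hy
    exact Or.inr fun hxN => hq ⟨hxN, P.2.1⟩

lemma snd_mem_quot_pair (N : Submods C) (P : Submods D)
    (q : ((C.wedge D).quot _ (N.2.pair P.2)).carrier) : q.1.1.2 = D.zero ∨ q.1.1.2 ∉ P.1 := by
  rcases q with ⟨⟨⟨x, y⟩, hx | hy⟩, hq | hq⟩
  · exact Or.inl (congrArg (·.1.2) hq)
  · obtain rfl : x = C.zero := hx
    exact Or.inr fun hyP => hq ⟨N.2.1, hyP⟩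
  · exact Or.inl hy
  · exact Or.inl hy

lemma smul_fst_eq_zero_of_notMem_pairSet {N : Submods C} {P : Submods D}
    {p : (C.wedge D).carrier} {a : A} (hx : C.smul a p.1.1 ∈ N.1)
    (hp : (C.wedge D).smul a p ∉ pairSet N.1 P.1) : C.smul a p.1.1 = C.zero := by
  rcases p.2 with h | h
  · rw [h, C.smul_zero]
  · refine absurd ⟨hx, ?_⟩ hp
    change D.smul a p.1.2 ∈ P.1
    rw [h, D.smul_zero]
    exact P.2.1

lemma smul_snd_eq_zero_of_notMem_pairSet {N : Submods C} {P : Submods D}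
    {p : (C.wedge D).carrier} {a : A} (hy : D.smul a p.1.2 ∈ P.1)
    (hp : (C.wedge D).smul a p ∉ pairSet N.1 P.1) : D.smul a p.1.2 = D.zero := by
  rcases p.2 with h | h
  · refine absurd ⟨?_, hy⟩ hp
    change C.smul a p.1.1 ∈ N.1
    rw [h, C.smul_zero]
    exact N.2.1
  · rw [h, D.smul_zero]

/-- Every element `(x, y)` of `(C ⊕ D)/(N ⊕ P)` already has `x` and `y` representing elements
of `C/N` and `D/P`, so the isomorphism is the identity on underlying pairs. -/
noncomputable def wedgeQuotIso (N : Submods C) (P : Submods D) :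
    Iso ((C.wedge D).quot _ (N.2.pair P.2)) ((C.quot N.1 N.2).wedge (D.quot P.1 P.2)) where
  toEquiv := {
    toFun := fun q => ⟨(⟨q.1.1.1, fst_mem_quot_pair N P q⟩, ⟨q.1.1.2, snd_mem_quot_pair N P q⟩),
      q.1.2.imp Subtype.ext Subtype.ext⟩
    invFun := fun r => ⟨⟨(r.1.1.1, r.1.2.1), r.2.imp (congrArg Subtype.val) (congrArg Subtype.val)⟩,
      by
        rcases r.1.1.2 with hx | hx
        · rcases r.1.2.2 with hy | hy
          · exact Or.inl (Subtype.ext (Prod.ext hx hy))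
          · exact Or.inr fun h => hy h.2
        · exact Or.inr fun h => hx h.1⟩
    left_inv := fun _ => rfl
    right_inv := fun _ => rfl }
  map_zero := rfl
  map_smul a q := by
    classical
    refine Subtype.ext (Prod.ext (Subtype.ext ?_) (Subtype.ext ?_)) <;>
      simp only [Equiv.coe_fn_mk] <;> split_ifs with h1 h2 h2
    any_goals rfl
    · exact absurd h1.1 h2
    · exact smul_fst_eq_zero_of_notMem_pairSet h2 h1
    · exact absurd h1.2 h2
    · exact smul_snd_eq_zero_of_notMem_pairSet h2 h1

lemma coprodF_hallMul (f g : IsoCl A → ℚ) (c d : IsoCl A) :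
    coprodF (hallMul f g) c d = hallMul₂ (coprodF f) (coprodF g) c d := by
  have := (Quotient.out c).2
  have := (Quotient.out d).2
  rw [coprodF, hallMul_clsOf, ← finsum_comp_equiv (submodsWedgeEquiv _ _).symm, hallMul₂,
    finsum_curry _ (Set.toFinite _)]
  refine finsum_congr fun N => finsum_congr fun P => ?_
  rw [coprodF_clsOf, coprodF_clsOf]
  exact congrArg₂ (· * ·) (congrArg f (wedgeQuotIso N P).clsOf_eq)
    (congrArg g (wedgeSubIso N P).clsOf_eq)

end Compatibility

section Associativity

variable {M : FModule A}

lemma isSubmod_quot_setOf_mem {N B : Set M.carrier} (hN : M.IsSubmod N) (hB : M.IsSubmod B) :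
    (M.quot N hN).IsSubmod {q | q.1 ∈ B} := by
  classical
  refine ⟨hB.1, fun a q (hq : q.1 ∈ B) => ?_⟩
  show ((M.quot N hN).smul a q).1 ∈ B
  rw [coe_quot_smul]
  split_ifs
  exacts [hB.1, hB.2 a _ hq]

noncomputable def submodsQuotEquiv (N : Submods M) :
    Submods (M.quot N.1 N.2) ≃ {B : Submods M // N.1 ⊆ B.1} where
  toFun Q := ⟨⟨_, Q.2.preimage (quotProj M N.1 N.2)⟩, fun x hx => by
    rw [Set.mem_preimage, quotProj_of_mem N.2 hx]
    exact Q.2.1⟩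
  invFun B := ⟨_, isSubmod_quot_setOf_mem N.2 B.1.2⟩
  left_inv Q := Subtype.ext (Set.ext fun q => by
    show (quotProj M N.1 N.2).toFun q.1 ∈ Q.1 ↔ q ∈ Q.1
    rw [quotProj_coe])
  right_inv B := by
    classical
    refine Subtype.ext (Subtype.ext (Set.ext fun x => ?_))
    show (if x ∈ N.1 then M.zero else x) ∈ B.1.1 ↔ x ∈ B.1.1
    split_ifs with hx
    · exact iff_of_true B.1.2.1 (B.2 hx)
    · rfl

def submodsSubEquiv (B : Submods M) : Submods (M.sub B.1 B.2) ≃ {S : Submods M // S.1 ⊆ B.1} where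
  toFun T := ⟨⟨_, T.2.image (subtypeHom M B.1 B.2)⟩, by rintro _ ⟨x, _, rfl⟩; exact x.2⟩
  invFun S := ⟨_, S.1.2.preimage (subtypeHom M B.1 B.2)⟩
  left_inv T := Subtype.ext (Set.preimage_image_eq _ Subtype.val_injective)
  right_inv S := Subtype.ext (Subtype.ext (by
    simpa [subtypeHom, Subtype.image_preimage_coe] using S.2))

def sigmaSubtypeComm {α β : Type*} (r : α → β → Prop) :
    (Σ a, {b // r a b}) ≃ Σ b, {a // r a b} where
  toFun x := ⟨x.2.1, x.1, x.2.2⟩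
  invFun x := ⟨x.2.1, x.1, x.2.2⟩
  left_inv _ := rfl
  right_inv _ := rfl

theorem finsum_sigma {α : Type*} [AddCommMonoid α] {ι : Type*} {κ : ι → Type*} [Finite ι]
    [∀ i, Finite (κ i)] (f : ∀ i, κ i → α) : ∑ᶠ i, ∑ᶠ k, f i k = ∑ᶠ x : Σ i, κ i, f x.1 x.2 := by
  have := Fintype.ofFinite ι
  have (i : ι) : Fintype (κ i) := Fintype.ofFinite _
  simp only [finsum_eq_sum_of_fintype]
  exact (Fintype.sum_sigma fun x : Σ i, κ i => f x.1 x.2).symm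

variable {N B : Set M.carrier} (hN : M.IsSubmod N) (hB : M.IsSubmod B)

noncomputable def quotQuotIso (hNB : N ⊆ B) :
    Iso ((M.quot N hN).quot _ (isSubmod_quot_setOf_mem hN hB)) (M.quot B hB) where
  toEquiv := {
    toFun := fun r => ⟨r.1.1, r.2.imp (congrArg Subtype.val) id⟩
    invFun := fun y => ⟨⟨y.1, y.2.imp id fun h hy => h (hNB hy)⟩, y.2.imp Subtype.ext id⟩
    left_inv := fun _ => rfl
    right_inv := fun _ => rfl }
  map_smul a r := by
    classical
    apply Subtype.ext
    show (((M.quot N hN).quot _ _).smul a r).1.1 = ((M.quot B hB).smul a ⟨r.1.1, _⟩).1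
    rw [coe_quot_smul, apply_ite Subtype.val, Set.mem_ofPred_eq, coe_quot_smul, coe_quot_smul]
    by_cases hx : M.smul a r.1.1 ∈ N
    · have hxB : M.smul a r.1.1 ∈ B := hNB hx
      simp [hx, hxB, hB.1]
    · simp [hx]
  map_zero := rfl

noncomputable def subQuotIso :
    Iso ((M.quot N hN).sub _ (isSubmod_quot_setOf_mem hN hB))
      ((M.sub B hB).quot _ (hN.preimage (subtypeHom M B hB))) where
  toEquiv := {
    toFun := fun q => ⟨⟨q.1.1, q.2⟩, q.1.2.imp Subtype.ext id⟩
    invFun := fun z => ⟨⟨z.1.1, z.2.imp (congrArg Subtype.val) id⟩, z.1.2⟩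
    left_inv := fun _ => rfl
    right_inv := fun _ => rfl }
  map_smul a q := by
    classical
    apply Subtype.ext
    apply Subtype.ext
    show ((M.quot N hN).smul a q.1).1 = (((M.sub B hB).quot _ _).smul a ⟨⟨q.1.1, q.2⟩, _⟩).1.1
    rw [coe_quot_smul, coe_quot_smul, apply_ite Subtype.val]
    rfl
  map_zero := rfl

def subSubIso (hNB : N ⊆ B) :
    Iso (M.sub N hN) ((M.sub B hB).sub _ (hN.preimage (subtypeHom M B hB))) where
  toEquiv := {
    toFun := fun x => ⟨⟨x.1, hNB x.2⟩, x.2⟩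
    invFun := fun z => ⟨z.1.1, z.2⟩
    left_inv := fun _ => rfl
    right_inv := fun _ => rfl }
  map_zero := rfl
  map_smul _ _ := rfl

lemma hallMul_assoc (f g h : IsoCl A → ℚ) :
    hallMul (hallMul f g) h = hallMul f (hallMul g h) := by
  funext c
  obtain ⟨M, rfl⟩ := exists_clsOf_eq c
  have := M.2
  simp only [hallMul_clsOf, finsum_mul, mul_finsum]
  rw [finsum_sigma, finsum_sigma,
    ← finsum_comp_equiv (Equiv.sigmaCongrRight fun N => (submodsQuotEquiv N).symm),
    ← finsum_comp_equiv (Equiv.sigmaCongrRight fun B => (submodsSubEquiv B).symm),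
    ← finsum_comp_equiv (sigmaSubtypeComm fun N B : Submods M.1 => N.1 ⊆ B.1)]
  refine finsum_congr fun ⟨N, B, hNB⟩ => ?_
  rw [mul_assoc]
  exact congrArg₂ (· * ·) (congrArg f (quotQuotIso N.2 B.2 hNB).clsOf_eq)
    (congrArg₂ (· * ·) (congrArg g (subQuotIso N.2 B.2).clsOf_eq)
      (congrArg h (subSubIso N.2 B.2 hNB).clsOf_eq))

end Associativity

end FModule

open FModule in
/-- **The Hall algebra of a finitely generated monoid is a graded, connected,
co-commutative bialgebra.**  Here the Hall algebra is the space of finitely supported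
`ℚ`-valued functions on isomorphism classes of finite `A`-modules with the convolution
product `(f ⋆ g)(M) = ∑_{N ⊆ M} f(M/N)g(N)`, the coproduct `Δ(f)(M,N) = f(M ⊕ N)`
(written in coordinates), the counit `ε(f) = f(0)`, and the grading by
`dim M = |M| - 1`. -/
theorem hall_algebra_is_bialgebra (A : Type v) [MonoidWithZero A] [Monoid.FG A] :
    -- the convolution of finitely supported functions is finitely supported
    (∀ f g : IsoCl A → ℚ, FinSupp f → FinSupp g → FinSupp (hallMul f g)) ∧
    -- ⋆ is associative
    (∀ f g h : IsoCl A → ℚ, hallMul (hallMul f g) h = hallMul f (hallMul g h)) ∧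
    -- the delta function of the zero module is a two-sided unit
    (∀ f : IsoCl A → ℚ,
      hallMul (deltaF (clsOf (FinFMod.zeroMod))) f = f ∧
      hallMul f (deltaF (clsOf (FinFMod.zeroMod))) = f) ∧
    -- Δ is cocommutative
    (∀ (f : IsoCl A → ℚ) (c d : IsoCl A), coprodF f c d = coprodF f d c) ∧
    -- Δ is coassociative
    (∀ (f : IsoCl A → ℚ) (a b c : IsoCl A),
      coprodF (fun x => coprodF f x c) a b = coprodF (fun x => coprodF f a x) b c) ∧
    -- counit axioms for Δ
    (∀ (f : IsoCl A → ℚ) (c : IsoCl A),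
      coprodF f (clsOf (FinFMod.zeroMod)) c = f c ∧
      coprodF f c (clsOf (FinFMod.zeroMod)) = f c) ∧
    -- Δ is multiplicative (bialgebra compatibility)
    (∀ (f g : IsoCl A → ℚ) (c d : IsoCl A),
      coprodF (hallMul f g) c d = hallMul₂ (coprodF f) (coprodF g) c d) ∧
    -- the counit is multiplicative
    (∀ f g : IsoCl A → ℚ, counitF (hallMul f g) = counitF f * counitF g) ∧
    -- Δ of the unit
    (∀ c d : IsoCl A,
      coprodF (deltaF (clsOf (FinFMod.zeroMod))) c d =
        deltaF (clsOf (FinFMod.zeroMod)) c * deltaF (clsOf (FinFMod.zeroMod)) d) ∧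
    -- the product is graded by dimension
    (∀ c d e : IsoCl A, hallMul (deltaF c) (deltaF d) e ≠ 0 →
      dimCl e = dimCl c + dimCl d) ∧
    -- the coproduct is graded by dimension
    (∀ c d : IsoCl A,
      dimCl (clsOf ((Quotient.out c).wedge (Quotient.out d))) = dimCl c + dimCl d) ∧
    -- connectedness: the degree-zero part is spanned by the class of the zero module
    (∀ c : IsoCl A, dimCl c = 0 → c = clsOf (FinFMod.zeroMod)) := by
  refine ⟨fun f g => finSupp_hallMul, hallMul_assoc,
    fun f => ⟨hallMul_deltaF_zero_left f, hallMul_deltaF_zero_right f⟩, coprodF_comm,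
    coprodF_assoc, fun f c => ⟨coprodF_zero_left f c, coprodF_zero_right f c⟩, coprodF_hallMul,
    counitF_hallMul, coprodF_deltaF_zero, fun c d e => dimCl_eq_add_of_hallMul_deltaF_ne_zero,
    fun c d => ?_, fun c => eq_clsOf_zeroMod_of_dimCl_eq_zero⟩
  simpa only [clsOf_out] using dimCl_clsOf_wedge (Quotient.out c) (Quotient.out d)
end

section
/- Let A be a finitely generated monoid and H_A its Hall algebra. The subspace J^α spanned by the delta functions δ_M over isomorphism classes of finite A-modules M that are NOT of type α is a Hopf ideal of H_A; that is, J^α is a two-sided ideal for the convolution product, a co-ideal for the coproduct, contained in the augmentation ideal, so that H_A/J^α is again a graded, connected, co-commutative Hopf algebra. -/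
universe u v

namespace FModule

variable {A : Type v} [MonoidWithZero A]

/-- An isomorphism class of finite `A`-modules consists of modules of type α. -/
def ClTypeAlpha (c : IsoCl A) : Prop := (Quotient.out c).1.TypeAlpha

/-- Membership in `J^α ⊆ H_A`: the span of the delta functions of the classes that are
NOT of type α, i.e. the finitely supported functions vanishing on all type α classes. -/
def MemJalpha (f : IsoCl A → ℚ) : Prop :=
  FinSupp f ∧ ∀ c : IsoCl A, ClTypeAlpha c → f c = 0

end FModule

/-!
Type α is stable under isomorphism, submodules, quotients and wedge sums, and the zero module
is of type α. Hence every summand of `(f ⋆ g)(M)` with `M` of type α evaluates `f` and `g` at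
modules of type α, and `f(M ⊕ N)` vanishes as soon as both `M` and `N` are of type α; splitting
`Δ f` according to whether the first factor is of type α exhibits the co-ideal property.
Finiteness of supports rests on the fact that a finitely generated `A` has only finitely many
isomorphism classes of modules of bounded cardinality, since a module structure on a finite set
is determined by the action of the generators.
-/

namespace FModule

variable {A : Type v} [MonoidWithZero A]

lemma TypeAlpha.of_iso {M N : FModule A} (e : Iso M N) (h : N.TypeAlpha) : M.TypeAlpha := by
  intro a m₁ m₂ hm
  rcases h a (e.toEquiv m₁) (e.toEquiv m₂) (by rw [← e.map_smul, ← e.map_smul, hm]) with h1 | h1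
  · exact Or.inl (e.toEquiv.injective h1)
  · refine Or.inr (e.toEquiv.injective ?_)
    rw [e.map_smul, h1, e.map_zero]

lemma clTypeAlpha_clsOf {M : FinFMod A} : ClTypeAlpha (clsOf M) ↔ M.1.TypeAlpha := by
  obtain ⟨e⟩ : Nonempty (Iso (Quotient.out (clsOf M)).1 M.1) := Quotient.mk_out M
  exact ⟨fun h => h.of_iso e.symm, fun h => h.of_iso e⟩

lemma typeAlpha_zeroMod : (FinFMod.zeroMod : FinFMod A).1.TypeAlpha :=
  fun _ _ _ _ => Or.inl rfl

lemma TypeAlpha.sub {M : FModule A} (h : M.TypeAlpha) {N : Set M.carrier} (hN : M.IsSubmod N) :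
    (M.sub N hN).TypeAlpha := by
  intro a m₁ m₂ hm
  exact (h a m₁.1 m₂.1 (congrArg Subtype.val hm)).imp Subtype.ext Subtype.ext

lemma TypeAlpha.quot {M : FModule A} (h : M.TypeAlpha) {N : Set M.carrier} (hN : M.IsSubmod N) :
    (M.quot N hN).TypeAlpha := by
  classical
  rintro a ⟨m₁, hm₁⟩ ⟨m₂, hm₂⟩ hm
  simp only [FModule.quot, Subtype.ext_iff] at hm ⊢
  split_ifs at hm ⊢ with h₁ h₂ h₂ <;> simp only at hm
  · exact Or.inr rfl
  · exact absurd (hm ▸ hN.1) h₂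
  · exact absurd (hm ▸ hN.1) h₁
  · exact (h a m₁ m₂ hm).imp id fun h0 => absurd (h0 ▸ hN.1) h₁

lemma TypeAlpha.wedge {M N : FModule A} (hM : M.TypeAlpha) (hN : N.TypeAlpha) :
    (M.wedge N).TypeAlpha := by
  rintro a ⟨⟨m₁, n₁⟩, hp₁⟩ ⟨⟨m₂, n₂⟩, hp₂⟩ hm
  simp only [FModule.wedge, Subtype.ext_iff, Prod.ext_iff] at hm hp₁ hp₂ ⊢
  have hMa := hM a m₁ m₂ hm.1
  have hNa := hN a n₁ n₂ hm.2
  have hM0 := M.smul_zero a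
  have hN0 := N.smul_zero a
  grind

noncomputable def cardCl (c : IsoCl A) : ℕ := Nat.card (Quotient.out c).1.carrier

lemma cardCl_clsOf (M : FinFMod A) : cardCl (clsOf M) = Nat.card M.1.carrier := by
  obtain ⟨e⟩ : Nonempty (Iso (Quotient.out (clsOf M)).1 M.1) := Quotient.mk_out M
  exact Nat.card_congr e.toEquiv

lemma card_le_card_quot_add_card_sub (M : FinFMod A) (N : Set M.1.carrier)
    (h : M.1.IsSubmod N) :
    Nat.card M.1.carrier ≤ Nat.card (M.quot N h).1.carrier + Nat.card (M.sub N h).1.carrier := by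
  have := (M.quot N h).2
  have := (M.sub N h).2
  rw [← Nat.card_sum]
  refine Nat.card_le_card_of_surjective (Sum.elim Subtype.val Subtype.val) fun m => ?_
  by_cases hm : m ∈ N
  · exact ⟨.inr ⟨m, hm⟩, rfl⟩
  · exact ⟨.inl ⟨m, Or.inr hm⟩, rfl⟩

lemma card_le_card_wedge_left (M N : FinFMod A) :
    Nat.card M.1.carrier ≤ Nat.card (M.wedge N).1.carrier := by
  have := (M.wedge N).2
  exact Nat.card_le_card_of_injective
    (fun m => (⟨(m, N.1.zero), Or.inr rfl⟩ : (M.wedge N).1.carrier))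
    fun _ _ h => congrArg (fun p => p.1.1) h

lemma card_le_card_wedge_right (M N : FinFMod A) :
    Nat.card N.1.carrier ≤ Nat.card (M.wedge N).1.carrier := by
  have := (M.wedge N).2
  exact Nat.card_le_card_of_injective
    (fun n => (⟨(M.1.zero, n), Or.inl rfl⟩ : (M.wedge N).1.carrier))
    fun _ _ h => congrArg (fun p => p.1.2) h

variable (A) in
/-- A module structure on `Fin (k + 1)`; packaging the action as a monoid hom into
`Function.End` encodes the laws `1 • m = m` and `(a * b) • m = a • b • m`. -/
def FinStructure (k : ℕ) : Type v :=
  {p : Fin (k + 1) × (A →* Function.End (Fin (k + 1))) //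
    (∀ m, p.2 0 m = p.1) ∧ ∀ a, p.2 a p.1 = p.1}

def FinStructure.toFinFMod {k : ℕ} (p : FinStructure A k) : FinFMod A :=
  ⟨{ carrier := Fin (k + 1)
     zero := p.1.1
     smul := fun a => p.1.2 a
     one_smul := fun m => by simp only [map_one]; rfl
     mul_smul := fun a b m => by simp only [map_mul]; rfl
     zero_smul := p.2.1
     smul_zero := p.2.2 }, inferInstance⟩

instance [Monoid.FG A] (k : ℕ) : Finite (FinStructure A k) := by
  obtain ⟨S, hS, hSfin⟩ := Monoid.fg_iff.mp ‹Monoid.FG A›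
  have : Finite S := hSfin
  refine Finite.of_injective (β := Fin (k + 1) × (S → Fin (k + 1) → Fin (k + 1)))
    (fun p => (p.1.1, fun s => p.1.2 s)) ?_
  rintro ⟨⟨z, σ⟩, _⟩ ⟨⟨z', σ'⟩, _⟩ h
  obtain ⟨hz, hσ⟩ := Prod.mk.inj h
  exact Subtype.ext
    (Prod.ext hz (MonoidHom.eq_of_eqOn_denseM hS fun s hs => congrFun hσ ⟨s, hs⟩))

lemma exists_finStructure (c : IsoCl A) :
    ∃ (k : ℕ) (p : FinStructure A k), k + 1 = cardCl c ∧ clsOf p.toFinFMod = c := by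
  set M := (Quotient.out c).1
  have : Finite M.carrier := (Quotient.out c).2
  have : Nonempty M.carrier := ⟨M.zero⟩
  obtain ⟨k, hk⟩ : ∃ k, Nat.card M.carrier = k + 1 := Nat.exists_eq_add_one.mpr Nat.card_pos
  let e : M.carrier ≃ Fin (k + 1) := (Finite.equivFin _).trans (finCongr hk)
  let σ : A →* Function.End (Fin (k + 1)) :=
    { toFun := fun a x => e (M.smul a (e.symm x))
      map_one' := funext fun x => show e (M.smul 1 _) = x by rw [M.one_smul, e.apply_symm_apply]
      map_mul' := fun a b => funext fun x =>
        show e _ = e (M.smul a (e.symm (e _))) by rw [e.symm_apply_apply, M.mul_smul] }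
  let p : FinStructure A k :=
    ⟨(e M.zero, σ), fun m => show e (M.smul 0 _) = _ by rw [M.zero_smul],
      fun a => show e (M.smul a (e.symm (e M.zero))) = _ by
        rw [e.symm_apply_apply, M.smul_zero]⟩
  let iso : Iso p.toFinFMod.1 M := ⟨e.symm, e.symm_apply_apply _, fun _ _ => e.symm_apply_apply _⟩
  exact ⟨k, p, hk.symm, (Quotient.sound (s := fmodSetoid A) ⟨iso⟩).trans (Quotient.out_eq c)⟩

lemma finite_setOf_cardCl_le [Monoid.FG A] (n : ℕ) : {c : IsoCl A | cardCl c ≤ n}.Finite := by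
  refine ((Set.finite_Iio n).biUnion
    fun k _ => Set.finite_range fun p : FinStructure A k => clsOf p.toFinFMod).subset ?_
  intro c hc
  obtain ⟨k, p, hk, hpc⟩ := exists_finStructure c
  exact Set.mem_biUnion (show k < n by have : cardCl c ≤ n := hc; omega) ⟨p, hpc⟩

lemma FinSupp.exists_cardCl_le {f : IsoCl A → ℚ} (hf : FinSupp f) :
    ∃ B, ∀ c, f c ≠ 0 → cardCl c ≤ B := by
  obtain ⟨B, hB⟩ := (hf.image cardCl).bddAbove
  exact ⟨B, fun c hc => hB ⟨c, hc, rfl⟩⟩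

lemma exists_ne_zero_of_hallMul_ne_zero {f g : IsoCl A → ℚ} {c : IsoCl A}
    (h : hallMul f g c ≠ 0) :
    ∃ N : Submods (Quotient.out c).1, f (clsOf ((Quotient.out c).quot N.1 N.2)) ≠ 0 ∧
      g (clsOf ((Quotient.out c).sub N.1 N.2)) ≠ 0 := by
  by_contra! hfg
  exact h (finsum_eq_zero_of_forall_eq_zero fun N => mul_eq_zero.mpr ((em _).imp_right (hfg N)))

lemma finSupp₂_coprodF [Monoid.FG A] {f : IsoCl A → ℚ} (hf : FinSupp f) :
    FinSupp₂ (coprodF f) := by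
  obtain ⟨B, hB⟩ := hf.exists_cardCl_le
  refine ((finite_setOf_cardCl_le B).prod (finite_setOf_cardCl_le B)).subset ?_
  rintro ⟨c, d⟩ hcd
  have hwedge := hB _ hcd
  rw [cardCl_clsOf] at hwedge
  exact ⟨(card_le_card_wedge_left _ _).trans hwedge, (card_le_card_wedge_right _ _).trans hwedge⟩

lemma MemJalpha.counitF_eq_zero {f : IsoCl A → ℚ} (hf : MemJalpha f) : counitF f = 0 :=
  hf.2 _ (clTypeAlpha_clsOf.mpr typeAlpha_zeroMod)

lemma MemJalpha.hallMul_left [Monoid.FG A] {f g : IsoCl A → ℚ} (hf : MemJalpha f)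
    (hg : FinSupp g) : MemJalpha (hallMul f g) := by
  refine ⟨finSupp_hallMul hf.1 hg, fun c hc => by_contra fun h => ?_⟩
  obtain ⟨N, hfN, -⟩ := exists_ne_zero_of_hallMul_ne_zero h
  exact hfN (hf.2 _ (clTypeAlpha_clsOf.mpr (TypeAlpha.quot hc N.2)))

lemma MemJalpha.hallMul_right [Monoid.FG A] {f g : IsoCl A → ℚ} (hg : MemJalpha g)
    (hf : FinSupp f) : MemJalpha (hallMul f g) := by
  refine ⟨finSupp_hallMul hf hg.1, fun c hc => by_contra fun h => ?_⟩
  obtain ⟨N, -, hgN⟩ := exists_ne_zero_of_hallMul_ne_zero h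
  exact hgN (hg.2 _ (clTypeAlpha_clsOf.mpr (TypeAlpha.sub hc N.2)))

lemma MemJalpha.coprodF_eq_zero {f : IsoCl A → ℚ} (hf : MemJalpha f) {c d : IsoCl A}
    (hc : ClTypeAlpha c) (hd : ClTypeAlpha d) : coprodF f c d = 0 :=
  hf.2 _ (clTypeAlpha_clsOf.mpr (TypeAlpha.wedge hc hd))

lemma MemJalpha.exists_coprodF_eq_add [Monoid.FG A] {f : IsoCl A → ℚ} (hf : MemJalpha f) :
    ∃ F G : IsoCl A → IsoCl A → ℚ, FinSupp₂ F ∧ FinSupp₂ G ∧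
      (∀ c d : IsoCl A, coprodF f c d = F c d + G c d) ∧
      (∀ c d : IsoCl A, ClTypeAlpha c → F c d = 0) ∧
      (∀ c d : IsoCl A, ClTypeAlpha d → G c d = 0) := by
  classical
  have hΔ := finSupp₂_coprodF hf.1
  refine ⟨fun c d => if ClTypeAlpha c then 0 else coprodF f c d,
    fun c d => if ClTypeAlpha c then coprodF f c d else 0,
    hΔ.subset (Function.support_subset_iff'.2 ?_), hΔ.subset (Function.support_subset_iff'.2 ?_),
    fun c d => ?_,
    fun c d hc => if_pos hc, fun c d hd => ?_⟩
  · rintro ⟨c, d⟩ hcd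
    have h0 : coprodF f c d = 0 := Function.notMem_support.mp hcd
    simp [h0]
  · rintro ⟨c, d⟩ hcd
    have h0 : coprodF f c d = 0 := Function.notMem_support.mp hcd
    simp [h0]
  · beta_reduce
    split_ifs <;> simp
  · beta_reduce
    split_ifs with hc
    exacts [hf.coprodF_eq_zero hc hd, rfl]

end FModule

open FModule in
/-- **`J^α` is a Hopf ideal of the Hall algebra `H_A`**: it is a two-sided ideal for the
convolution product, a co-ideal for the coproduct (`Δ(J^α) ⊆ J^α ⊗ H + H ⊗ J^α`), and
is contained in the augmentation ideal. -/
theorem Jalpha_is_hopf_ideal (A : Type v) [MonoidWithZero A] [Monoid.FG A] :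
    -- contained in the augmentation ideal
    (∀ f : IsoCl A → ℚ, MemJalpha f → counitF f = 0) ∧
    -- two-sided ideal for ⋆
    (∀ f g : IsoCl A → ℚ, MemJalpha f → FinSupp g → MemJalpha (hallMul f g)) ∧
    (∀ f g : IsoCl A → ℚ, FinSupp f → MemJalpha g → MemJalpha (hallMul f g)) ∧
    -- co-ideal: Δ(J^α) ⊆ J^α ⊗ H + H ⊗ J^α
    (∀ f : IsoCl A → ℚ, MemJalpha f →
      ∃ F G : IsoCl A → IsoCl A → ℚ, FinSupp₂ F ∧ FinSupp₂ G ∧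
        (∀ c d : IsoCl A, coprodF f c d = F c d + G c d) ∧
        (∀ c d : IsoCl A, ClTypeAlpha c → F c d = 0) ∧
        (∀ c d : IsoCl A, ClTypeAlpha d → G c d = 0)) :=
  ⟨fun _ hf => hf.counitF_eq_zero, fun _ _ hf hg => hf.hallMul_left hg,
    fun _ _ hf hg => hg.hallMul_right hf, fun _ hf => hf.exists_coprodF_eq_add⟩
end
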